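/- arXiv:0901.2451 — 5 statements merged into one kernel-verified Lean document; each statement's English description precedes it below -/
import Mathlib

section
/- Let (Z̄, T̄) be a fluid model solution under the maximum pressure policy with parameter α (α_i > 0 for all i), for limit network data (R, A) satisfying the heavy traffic and complete resource pooling assumptions. If Z̄(τ₁) = ζ^α · W̄(τ₁) for some τ₁ ≥ 0 (with W̄(t) = Σ_i y*_i Z̄_i(t)), then Z̄(t) = ζ^α · W̄(t) for all t ≥ τ₁. -/
open Finset

section Network

variable {I J K : Type*} [Fintype I] [Fintype J] [Fintype K] [DecidableEq J] [DecidableEq K]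

/-- Assumptions on the capacity consumption matrix `A`: entries in `{0,1}`;
input processors only work on input activities and service processors only on
service activities; every activity uses some processor.  Here `JI` is the set
of input activities (service activities are its complement) and `KI` the set
of input processors (service processors are its complement). -/
def NetData (A : K → J → ℝ) (JI : Finset J) (KI : Finset K) : Prop :=
  (∀ k j, A k j = 0 ∨ A k j = 1) ∧
  (∀ k j, ((k ∈ KI ∧ j ∉ JI) ∨ (k ∉ KI ∧ j ∈ JI)) → A k j = 0) ∧
  (∀ j, ∃ k, A k j = 1)

/-- The allocation set `𝒜`. -/
def Alloc (A : K → J → ℝ) (KI : Finset K) : Set (J → ℝ) :=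
  {a | (∀ j, 0 ≤ a j) ∧ (∀ k, ∑ j, A k j * a j ≤ 1) ∧ ∀ k ∈ KI, ∑ j, A k j * a j = 1}

/-- Feasibility for the static planning problem. -/
def SPPfeas (R : I → J → ℝ) (A : K → J → ℝ) (KI : Finset K) (ρ : ℝ) (x : J → ℝ) : Prop :=
  (∀ i, ∑ j, R i j * x j = 0) ∧ (∀ k ∈ KI, ∑ j, A k j * x j = 1) ∧
  (∀ k, k ∉ KI → ∑ j, A k j * x j ≤ ρ) ∧ (∀ j, 0 ≤ x j)

/-- Optimality for the static planning problem (minimize `ρ`). -/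
def SPPopt (R : I → J → ℝ) (A : K → J → ℝ) (KI : Finset K) (ρ : ℝ) (x : J → ℝ) : Prop :=
  SPPfeas R A KI ρ x ∧ ∀ ρ' x', SPPfeas R A KI ρ' x' → ρ ≤ ρ'

/-- Unique optimality for the static planning problem. -/
def SPPuniqueOpt (R : I → J → ℝ) (A : K → J → ℝ) (KI : Finset K) (ρ : ℝ) (x : J → ℝ) : Prop :=
  SPPopt R A KI ρ x ∧ ∀ ρ' x', SPPopt R A KI ρ' x' → ρ' = ρ ∧ x' = x

/-- Feasibility for the dual of the static planning problem. -/
def Dfeas (R : I → J → ℝ) (A : K → J → ℝ) (JI : Finset J) (KI : Finset K)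
    (y : I → ℝ) (z : K → ℝ) : Prop :=
  (∀ j ∈ JI, ∑ i, y i * R i j ≤ - ∑ k ∈ KI, z k * A k j) ∧
  (∀ j, j ∉ JI → ∑ i, y i * R i j ≤ ∑ k ∈ KIᶜ, z k * A k j) ∧
  (∑ k ∈ KIᶜ, z k = 1) ∧ (∀ k, k ∉ KI → 0 ≤ z k)

/-- Optimality for the dual problem (maximize `∑_{k ∈ KI} z k`). -/
def Dopt (R : I → J → ℝ) (A : K → J → ℝ) (JI : Finset J) (KI : Finset K)
    (y : I → ℝ) (z : K → ℝ) : Prop :=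
  Dfeas R A JI KI y z ∧
    ∀ y' z', Dfeas R A JI KI y' z' → ∑ k ∈ KI, z' k ≤ ∑ k ∈ KI, z k

/-- Unique optimality for the dual problem. -/
def DuniqueOpt (R : I → J → ℝ) (A : K → J → ℝ) (JI : Finset J) (KI : Finset K)
    (y : I → ℝ) (z : K → ℝ) : Prop :=
  Dopt R A JI KI y z ∧ ∀ y' z', Dopt R A JI KI y' z' → y' = y ∧ z' = z

end Network

/-- The lifting vector `ζ^α` determined by `α` and the dual optimum `y`. -/
noncomputable def zeta {I : Type*} [Fintype I] (α y : I → ℝ) : I → ℝ :=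
  fun i => (y i / α i) / ∑ i', (y i') ^ 2 / α i'

/-- A fluid model solution under the maximum pressure policy with parameter `α`. -/
def FluidSol {I J K : Type*} [Fintype I] [Fintype J] [Fintype K] [DecidableEq J] [DecidableEq K]
    (R : I → J → ℝ) (A : K → J → ℝ) (KI : Finset K) (α : I → ℝ)
    (Z : ℝ → I → ℝ) (T : ℝ → J → ℝ) : Prop :=
  (∀ t, 0 ≤ t → ∀ i, Z t i = Z 0 i - ∑ j, R i j * T t j) ∧
  (∀ t, 0 ≤ t → ∀ i, 0 ≤ Z t i) ∧
  (∀ s t, 0 ≤ s → s ≤ t → ∀ k ∈ KI, ∑ j, A k j * (T t j - T s j) = t - s) ∧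
  (∀ s t, 0 ≤ s → s ≤ t → ∀ k, ∑ j, A k j * (T t j - T s j) ≤ t - s) ∧
  (∀ s t, 0 ≤ s → s ≤ t → ∀ j, T s j ≤ T t j) ∧
  (∀ j, T 0 j = 0) ∧
  (∀ t, 0 < t → ∀ (Z' : I → ℝ) (T' : J → ℝ),
    (∀ i, HasDerivAt (fun s => Z s i) (Z' i) t) →
    (∀ j, HasDerivAt (fun s => T s j) (T' j) t) →
    ∑ i, α i * Z t i * ∑ j, R i j * T' j =
      sSup ((fun a => ∑ i, α i * Z t i * ∑ j, R i j * a j) '' Alloc A KI))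

/-!
The distance to the collapsed states is measured by the Lyapunov function
`g(t) = ∑ i, α i * (Z̄ i t - ζ^α i * W̄ t) ^ 2`. As `∑ i, α i * ζ^α i * v i = (y* ⬝ᵥ v) / κ`
with `κ = ∑ i, y* i ^ 2 / α i`, wherever `T̄` is differentiable
`g' = 2 * (∑ i, α i * Z̄ i * Z̄' i - W̄ * W̄' / κ)`, where `T̄'` is an allocation and `Z̄' = -R T̄'`.
By the maximum pressure condition `-∑ i, α i * Z̄ i * Z̄' i` is the maximal pressure over
allocations, which is at least the pressure `0` of `x*`. By LP strong duality (proved through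
Farkas' lemma, itself by Fourier–Motzkin elimination) `∑ k ∈ 𝒦_I, z* k ≥ 1`, which makes
`y* ⬝ᵥ R a ≤ 0` for every allocation `a`; hence `W̄' ≥ 0`, while `W̄ ≥ 0` as `y*, Z̄ ≥ 0`.
So `g' ≤ 0` almost everywhere, and `g` is absolutely continuous because `T̄` is 1-Lipschitz;
thus `g` is nonincreasing and vanishes after `τ₁` since it vanishes at `τ₁`.
-/

open Matrix Set MeasureTheory Filter Topology

theorem exists_between_of_finite {P Q : Type*} [Finite P] [Finite Q]
    {lo : Q → ℝ} {hi : P → ℝ} (h : ∀ p q, lo q ≤ hi p) :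
    ∃ t, (∀ q, lo q ≤ t) ∧ ∀ p, t ≤ hi p := by
  cases isEmpty_or_nonempty Q with
  | inl hQ =>
    obtain ⟨m, hm⟩ := (Set.finite_range hi).bddBelow
    exact ⟨m, isEmptyElim, fun p => hm ⟨p, rfl⟩⟩
  | inr hQ =>
    exact ⟨⨆ q, lo q, le_ciSup (Set.finite_range lo).bddAbove, fun p => ciSup_le (h p)⟩

namespace Matrix

section FourierMotzkin

variable {L : Type*}

abbrev FourierMotzkinRow (c : L → ℝ) := {l // c l = 0} ⊕ {l // 0 < c l} × {l // c l < 0}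

noncomputable def fourierMotzkin [DecidableEq L] (c : L → ℝ) : Matrix (FourierMotzkinRow c) L ℝ :=
  Sum.elim (fun l => Pi.single l.1 1)
    (fun pq => Pi.single pq.1.1 (c pq.1)⁻¹ + Pi.single pq.2.1 (-c pq.2)⁻¹)

variable [DecidableEq L] {c : L → ℝ}

theorem fourierMotzkin_nonneg (r : FourierMotzkinRow c) : 0 ≤ fourierMotzkin c r := by
  rcases r with l₀ | ⟨p, q⟩
  · exact Pi.single_nonneg.2 zero_le_one
  · exact add_nonneg (Pi.single_nonneg.2 (inv_nonneg.2 p.2.le))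
      (Pi.single_nonneg.2 (inv_nonneg.2 (neg_nonneg.2 q.2.le)))

variable [Fintype L]

theorem fourierMotzkin_mulVec_inl (r : L → ℝ) (l : {l // c l = 0}) :
    (fourierMotzkin c *ᵥ r) (.inl l) = r l :=
  (single_dotProduct r 1 l.1).trans (one_mul _)

theorem fourierMotzkin_mulVec_inr (r : L → ℝ) (p : {l // 0 < c l}) (q : {l // c l < 0}) :
    (fourierMotzkin c *ᵥ r) (.inr (p, q)) = r p / c p - r q / c q := by
  change (Pi.single _ _ + Pi.single _ _) ⬝ᵥ r = _
  rw [add_dotProduct, single_dotProduct, single_dotProduct]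
  ring

theorem fourierMotzkin_mulVec_self : fourierMotzkin c *ᵥ c = 0 := by
  ext (l | ⟨p, q⟩)
  · exact (fourierMotzkin_mulVec_inl (c := c) c l).trans l.2
  · rw [fourierMotzkin_mulVec_inr, div_self p.2.ne', div_self q.2.ne, sub_self, Pi.zero_apply]

theorem exists_mul_le_of_fourierMotzkin_mulVec_nonneg {r : L → ℝ}
    (h : 0 ≤ fourierMotzkin c *ᵥ r) : ∃ t, ∀ l, c l * t ≤ r l := by
  obtain ⟨t, hlo, hhi⟩ := exists_between_of_finite
    (lo := fun q : {l // c l < 0} => r q / c q) (hi := fun p : {l // 0 < c l} => r p / c p)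
    fun p q => sub_nonneg.1 (fourierMotzkin_mulVec_inr r p q ▸ h (.inr (p, q)))
  refine ⟨t, fun l => ?_⟩
  rcases lt_trichotomy (c l) 0 with hl | hl | hl
  · exact (div_le_iff_of_neg' hl).1 (hlo ⟨l, hl⟩)
  · simpa [hl, fourierMotzkin_mulVec_inl] using h (.inl ⟨l, hl⟩)
  · exact (le_div_iff₀' hl).1 (hhi ⟨l, hl⟩)

end FourierMotzkin

theorem exists_farkas_certificate_fin {L : Type*} [Fintype L] (n : ℕ) (M : Matrix L (Fin n) ℝ)
    (b : L → ℝ) (h : ¬ ∃ x, M *ᵥ x ≤ b) : ∃ u, 0 ≤ u ∧ u ᵥ* M = 0 ∧ u ⬝ᵥ b < 0 := by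
  classical
  induction n generalizing L with
  | zero =>
    obtain ⟨l, hl⟩ : ∃ l, b l < 0 := by
      by_contra! hb
      exact h ⟨0, fun l => by simpa using hb l⟩
    exact ⟨Pi.single l 1, Pi.single_nonneg.2 zero_le_one, Subsingleton.elim _ _, by simpa using hl⟩
  | succ n ih =>
    -- Eliminate the variable `0`: the reduced system `fourierMotzkin c * M'` is still infeasible,
    -- and its certificate pulls back along the nonnegative matrix `fourierMotzkin c`.
    set c : L → ℝ := fun l => M l 0
    set M' : Matrix L (Fin n) ℝ := M.submatrix id Fin.succ
    have hsplit : ∀ t x', M *ᵥ Fin.cons t x' = t • c + M' *ᵥ x' := by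
      intro t x'
      ext l
      simp [mulVec, dotProduct, Fin.sum_univ_succ, c, M', mul_comm]
    obtain ⟨u, hu, huM, hub⟩ := ih (fourierMotzkin c * M') (fourierMotzkin c *ᵥ b) <| by
      rintro ⟨x', hx'⟩
      obtain ⟨t, ht⟩ :=
          exists_mul_le_of_fourierMotzkin_mulVec_nonneg (c := c) (r := b - M' *ᵥ x') <| by
        rw [mulVec_sub, mulVec_mulVec]
        exact sub_nonneg.2 hx'
      refine h ⟨Fin.cons t x', fun l => ?_⟩
      have := ht l
      rw [hsplit]
      simp only [Pi.add_apply, Pi.smul_apply, smul_eq_mul, Pi.sub_apply] at this ⊢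
      linarith
    refine ⟨u ᵥ* fourierMotzkin c, fun l => ?_, ?_, ?_⟩
    · exact sum_nonneg fun r _ => mul_nonneg (hu r) (fourierMotzkin_nonneg r l)
    · ext j
      refine Fin.cases ?_ (fun j => ?_) j
      · change (u ᵥ* fourierMotzkin c) ⬝ᵥ c = 0
        rw [← dotProduct_mulVec, fourierMotzkin_mulVec_self, dotProduct_zero]
      · change (u ᵥ* fourierMotzkin c ᵥ* M') j = 0
        rw [vecMul_vecMul, huM, Pi.zero_apply]
    · rwa [← dotProduct_mulVec]

theorem exists_farkas_certificate {V L : Type*} [Fintype V] [Fintype L] (M : Matrix L V ℝ)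
    (b : L → ℝ) (h : ¬ ∃ x, M *ᵥ x ≤ b) : ∃ u, 0 ≤ u ∧ u ᵥ* M = 0 ∧ u ⬝ᵥ b < 0 := by
  let e := Fintype.equivFin V
  obtain ⟨u, hu, huM, hub⟩ := exists_farkas_certificate_fin _ (M.submatrix id e.symm) b <| by
    rintro ⟨x, hx⟩
    exact h ⟨x ∘ e, by simpa [submatrix_mulVec_equiv] using hx⟩
  refine ⟨u, hu, funext fun v => ?_, hub⟩
  simpa [vecMul, dotProduct] using congrFun huM (e v)

theorem exists_farkas_certificate_of_nonneg {V L : Type*} [Fintype V] [Fintype L]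
    (M : Matrix L V ℝ) (b : L → ℝ) (S : Set L)
    (h : ¬ ∃ x, 0 ≤ x ∧ M *ᵥ x ≤ b ∧ ∀ l ∈ S, b l ≤ (M *ᵥ x) l) :
    ∃ u, (∀ l ∉ S, 0 ≤ u l) ∧ 0 ≤ u ᵥ* M ∧ u ⬝ᵥ b < 0 := by
  classical
  let mask : (L → ℝ) → L → ℝ := fun v l => if l ∈ S then v l else 0
  let E : Matrix L V ℝ := fun l j => if l ∈ S then M l j else 0
  have hEx : ∀ x, E *ᵥ x = mask (M *ᵥ x) := fun x => funext fun l => by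
    by_cases hl : l ∈ S <;> simp [E, mask, hl, mulVec, dotProduct]
  have hdE : ∀ d, d ᵥ* E = mask d ᵥ* M := fun d => funext fun j =>
    sum_congr rfl fun l _ => by by_cases hl : l ∈ S <;> simp [E, mask, hl]
  have hdb : ∀ d, d ⬝ᵥ mask b = mask d ⬝ᵥ b := fun d =>
    sum_congr rfl fun l _ => by by_cases hl : l ∈ S <;> simp [mask, hl]
  obtain ⟨U, hU, hUM, hUb⟩ := exists_farkas_certificate
    (fromRows (fromRows M (-E)) (-1 : Matrix V V ℝ)) (Sum.elim (Sum.elim b (-mask b)) 0) <| by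
    rintro ⟨x, hx⟩
    simp only [fromRows_mulVec, neg_mulVec, one_mulVec, hEx] at hx
    refine h ⟨x, fun j => ?_, fun l => ?_, fun l hl => ?_⟩
    · simpa using hx (.inr j)
    · simpa using hx (.inl (.inl l))
    · simpa [mask, hl] using hx (.inl (.inr l))
  set a := (U ∘ Sum.inl) ∘ Sum.inl
  set d := (U ∘ Sum.inl) ∘ Sum.inr
  refine ⟨a - mask d, fun l hl => by simpa [a, mask, hl] using hU (.inl (.inl l)), ?_, ?_⟩
  · rw [vecMul_fromRows, vecMul_fromRows, vecMul_neg, vecMul_neg, vecMul_one, hdE] at hUM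
    rw [sub_vecMul, show a ᵥ* M - mask d ᵥ* M = U ∘ Sum.inr by linear_combination hUM]
    exact fun j => hU _
  · rw [← Sum.elim_comp_inl_inr U, ← Sum.elim_comp_inl_inr (U ∘ Sum.inl),
      sumElim_dotProduct_sumElim, sumElim_dotProduct_sumElim, dotProduct_neg, hdb,
      dotProduct_zero, add_zero] at hUb
    rwa [sub_dotProduct, sub_eq_add_neg]

theorem dotProduct_mulVec_le {V L : Type*} [Fintype V] [Fintype L] {M : Matrix L V ℝ}
    {S : Set L} {b u : L → ℝ} {x : V → ℝ} (hu : ∀ l ∉ S, 0 ≤ u l) (hle : M *ᵥ x ≤ b)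
    (hge : ∀ l ∈ S, b l ≤ (M *ᵥ x) l) : u ⬝ᵥ (M *ᵥ x) ≤ u ⬝ᵥ b := by
  refine sum_le_sum fun l _ => ?_
  by_cases hl : l ∈ S
  · rw [le_antisymm (hle l) (hge l hl)]
  · exact mul_le_mul_of_nonneg_left (hle l) (hu l hl)

end Matrix

theorem NetData.nonneg {J K : Type*} {A : K → J → ℝ} {JI : Finset J} {KI : Finset K}
    (hND : NetData A JI KI) (k : K) (j : J) : 0 ≤ A k j := by
  rcases hND.1 k j with h | h <;> simp [h]

section Duality

variable {I J K : Type*} [Fintype I] [Fintype K] [DecidableEq K]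
  {R : I → J → ℝ} {A : K → J → ℝ} {JI : Finset J} {KI : Finset K}

theorem dfeas_iff (hND : NetData A JI KI) {y : I → ℝ} {z : K → ℝ} :
    Dfeas R A JI KI y z ↔
      (∀ j, ∑ i, y i * R i j ≤ ∑ k, (if k ∈ KI then -z k else z k) * A k j) ∧
        ∑ k ∈ KIᶜ, z k = 1 ∧ ∀ k ∉ KI, 0 ≤ z k := by
  have hsplit : ∀ j, ∑ k, (if k ∈ KI then -z k else z k) * A k j =
      -∑ k ∈ KI, z k * A k j + ∑ k ∈ KIᶜ, z k * A k j := fun j => by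
    rw [← sum_add_sum_compl KI, ← sum_neg_distrib]
    congr 1 <;> refine sum_congr rfl fun k hk => ?_ <;> simp_all
  have hinput : ∀ j ∈ JI, ∑ k ∈ KIᶜ, z k * A k j = 0 := fun j hj =>
    sum_eq_zero fun k hk => by rw [hND.2.1 k j (.inr ⟨Finset.mem_compl.1 hk, hj⟩), mul_zero]
  have hservice : ∀ j ∉ JI, ∑ k ∈ KI, z k * A k j = 0 := fun j hj =>
    sum_eq_zero fun k hk => by rw [hND.2.1 k j (.inl ⟨hk, hj⟩), mul_zero]
  refine ⟨fun ⟨hI, hS, hsum, hnn⟩ => ⟨fun j => ?_, hsum, hnn⟩,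
    fun ⟨hcol, hsum, hnn⟩ => ⟨fun j hj => ?_, fun j hj => ?_, hsum, hnn⟩⟩
  · rw [hsplit]
    by_cases hj : j ∈ JI
    · linarith [hI j hj, hinput j hj]
    · linarith [hS j hj, hservice j hj]
  · linarith [hcol j, hsplit j, hinput j hj]
  · linarith [hcol j, hsplit j, hservice j hj]

theorem dfeas_of_column_nonneg (hND : NetData A JI KI) {y : I → ℝ} {q : K → ℝ}
    (hcol : ∀ j, 0 ≤ ∑ i, y i * R i j + ∑ k, q k * A k j) (hq : ∀ k ∉ KI, 0 ≤ q k)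
    (hs : 0 < ∑ k ∈ KIᶜ, q k) :
    Dfeas R A JI KI (fun i => -y i / ∑ k ∈ KIᶜ, q k)
      (fun k => (if k ∈ KI then -q k else q k) / ∑ k ∈ KIᶜ, q k) := by
  set s := ∑ k ∈ KIᶜ, q k
  refine (dfeas_iff hND).2 ⟨fun j => ?_, ?_, fun k hk => ?_⟩
  · calc ∑ i, -y i / s * R i j = -(∑ i, y i * R i j) / s := by
          rw [neg_div, sum_div, ← sum_neg_distrib]
          exact sum_congr rfl fun i _ => by ring
      _ ≤ (∑ k, q k * A k j) / s := div_le_div_of_nonneg_right (by linarith [hcol j]) hs.le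
      _ = _ := by
          rw [sum_div]
          exact sum_congr rfl fun k _ => by split_ifs <;> ring
  · rw [← sum_div, ← div_self hs.ne']
    exact congrArg (· / s) (sum_congr rfl fun k hk => by simp [Finset.mem_compl.1 hk])
  · simpa [hk] using div_nonneg (hq k hk) hs.le

variable [Fintype J]

theorem Dfeas.dotProduct_mulVec_nonpos (hND : NetData A JI KI) {y : I → ℝ} {z : K → ℝ}
    (hD : Dfeas R A JI KI y z) (hz : 1 ≤ ∑ k ∈ KI, z k) {a : J → ℝ} (ha : a ∈ Alloc A KI) :
    y ⬝ᵥ (R *ᵥ a) ≤ 0 := by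
  obtain ⟨hcol, hsum, hnn⟩ := (dfeas_iff hND).1 hD
  obtain ⟨ha0, hcap, hinput⟩ := ha
  change ∀ k, (A *ᵥ a) k ≤ 1 at hcap
  change ∀ k ∈ KI, (A *ᵥ a) k = 1 at hinput
  let σ : K → ℝ := fun k => if k ∈ KI then -z k else z k
  have hload : σ ⬝ᵥ (A *ᵥ a) ≤ -∑ k ∈ KI, z k + ∑ k ∈ KIᶜ, z k := by
    rw [dotProduct, ← sum_add_sum_compl KI, ← sum_neg_distrib]
    refine add_le_add (le_of_eq (sum_congr rfl fun k hk => ?_)) (sum_le_sum fun k hk => ?_)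
    · simp [σ, hk, hinput k hk]
    · rw [Finset.mem_compl] at hk
      simpa [σ, hk] using mul_le_of_le_one_right (hnn k hk) (hcap k)
  calc y ⬝ᵥ (R *ᵥ a) = (y ᵥ* R) ⬝ᵥ a := dotProduct_mulVec y R a
    _ ≤ (σ ᵥ* A) ⬝ᵥ a := dotProduct_le_dotProduct_of_nonneg_right hcol ha0
    _ = σ ⬝ᵥ (A *ᵥ a) := (dotProduct_mulVec σ A a).symm
    _ ≤ 0 := by linarith

end Duality

section StaticPlanning

variable {I J K : Type*} [Fintype J] {R : I → J → ℝ} {A : K → J → ℝ} {JI : Finset J}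
  {KI : Finset K}

theorem SPPfeas.mem_alloc {ρ : ℝ} {x : J → ℝ} (h : SPPfeas R A KI ρ x) (hρ : ρ ≤ 1) :
    x ∈ Alloc A KI := by
  refine ⟨h.2.2.2, fun k => ?_, h.2.1⟩
  by_cases hk : k ∈ KI
  exacts [(h.2.1 k hk).le, (h.2.2.1 k hk).trans hρ]

def sppEqRows (KI : Finset K) : Set (I ⊕ K) :=
  Set.range Sum.inl ∪ Sum.inr '' KI

variable [DecidableEq K]

def sppRhs (KI : Finset K) (ρ : ℝ) : I ⊕ K → ℝ :=
  Sum.elim 0 fun k => if k ∈ KI then 1 else ρ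

theorem sppFeas_iff {ρ : ℝ} {x : J → ℝ} :
    SPPfeas R A KI ρ x ↔ 0 ≤ x ∧ fromRows R A *ᵥ x ≤ sppRhs KI ρ ∧
      ∀ l ∈ sppEqRows KI, sppRhs KI ρ l ≤ (fromRows R A *ᵥ x) l := by
  constructor
  · rintro ⟨hR, hin, hser, hx⟩
    refine ⟨hx, ?_, ?_⟩
    · rintro (i | k)
      · exact (hR i).le
      · change (A *ᵥ x) k ≤ if k ∈ KI then 1 else ρ
        split_ifs with hk
        exacts [(hin k hk).le, hser k hk]
    · rintro _ (⟨i, rfl⟩ | ⟨k, hk, rfl⟩)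
      · exact (hR i).ge
      · rw [mem_coe] at hk
        change (if k ∈ KI then 1 else ρ) ≤ (A *ᵥ x) k
        rw [if_pos hk]
        exact (hin k hk).ge
  · rintro ⟨hx, hle, hge⟩
    refine ⟨fun i => le_antisymm (hle (.inl i)) (hge _ (.inl ⟨i, rfl⟩)), fun k hk => ?_,
      fun k hk => ?_, hx⟩
    · have hle' := hle (.inr k)
      have hge' := hge _ (.inr ⟨k, hk, rfl⟩)
      simp only [sppRhs, Sum.elim_inr, if_pos hk] at hle' hge'
      exact le_antisymm hle' hge'
    · have hle' := hle (.inr k)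
      simp only [sppRhs, Sum.elim_inr, if_neg hk] at hle'
      exact hle'

variable [Fintype I] [Fintype K]

theorem SPPopt.exists_dfeas_lt (hND : NetData A JI KI) {ρ δ : ℝ} {x : J → ℝ}
    (hopt : SPPopt R A KI ρ x) (hδ : 0 < δ) :
    ∃ y z, Dfeas R A JI KI y z ∧ ρ - δ < ∑ k ∈ KI, z k := by
  obtain ⟨u, hu, huM, hub⟩ := exists_farkas_certificate_of_nonneg (fromRows R A)
      (sppRhs KI (ρ - δ)) (sppEqRows KI) <| by
    rintro ⟨x', hx'⟩
    linarith [hopt.2 _ x' (sppFeas_iff.2 hx')]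
  obtain ⟨y, q, rfl⟩ : ∃ y q, u = Sum.elim y q := ⟨_, _, (Sum.elim_comp_inl_inr u).symm⟩
  have hq : ∀ k ∉ KI, 0 ≤ q k := fun k hk => hu (.inr k) (by simp [sppEqRows, hk])
  set s := ∑ k ∈ KIᶜ, q k
  have hrhs : ∀ ρ', Sum.elim y q ⬝ᵥ sppRhs KI ρ' = ∑ k ∈ KI, q k + ρ' * s := fun ρ' => by
    rw [sppRhs, sumElim_dotProduct_sumElim, dotProduct_zero, zero_add, dotProduct,
      ← sum_add_sum_compl KI, mul_sum]
    congr 1 <;> refine sum_congr rfl fun k hk => ?_ <;> simp_all [mul_comm]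
  have hweak : 0 ≤ Sum.elim y q ⬝ᵥ sppRhs KI ρ := by
    obtain ⟨hx0, hle, hge⟩ := sppFeas_iff.1 hopt.1
    calc 0 ≤ (Sum.elim y q ᵥ* fromRows R A) ⬝ᵥ x := dotProduct_nonneg_of_nonneg huM hx0
      _ = Sum.elim y q ⬝ᵥ (fromRows R A *ᵥ x) := (dotProduct_mulVec _ _ _).symm
      _ ≤ _ := dotProduct_mulVec_le hu hle hge
  rw [hrhs] at hweak hub
  -- `x` is feasible at level `ρ` but not at `ρ - δ`, so the certificate puts positive mass on
  -- the service processors; normalizing by that mass gives the dual point.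
  have hs : 0 < s := pos_of_mul_pos_right (by linarith : 0 < δ * s) hδ.le
  have hcol : ∀ j, 0 ≤ ∑ i, y i * R i j + ∑ k, q k * A k j := fun j => by
    have h := huM j
    simp only [vecMul, dotProduct, Fintype.sum_sum_type, Sum.elim_inl, Sum.elim_inr] at h
    exact h
  refine ⟨_, _, dfeas_of_column_nonneg hND hcol hq hs, ?_⟩
  rw [← sum_div, lt_div_iff₀ hs,
    sum_congr rfl fun k hk => (if_pos hk : (if k ∈ KI then -q k else q k) = -q k),
    sum_neg_distrib]
  linarith

theorem SPPopt.le_sum_of_dopt (hND : NetData A JI KI) {ρ : ℝ} {x : J → ℝ} {y : I → ℝ}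
    {z : K → ℝ} (hopt : SPPopt R A KI ρ x) (hD : Dopt R A JI KI y z) : ρ ≤ ∑ k ∈ KI, z k :=
  le_of_forall_pos_lt_add fun δ hδ => by
    obtain ⟨y', z', hfeas, hlt⟩ := hopt.exists_dfeas_lt hND hδ
    linarith [hD.2 y' z' hfeas]

end StaticPlanning

namespace AbsolutelyContinuousOnInterval

theorem congr {X : Type*} [PseudoMetricSpace X] {f g : ℝ → X} {a b : ℝ}
    (hf : AbsolutelyContinuousOnInterval f a b) (hfg : EqOn f g (uIcc a b)) :
    AbsolutelyContinuousOnInterval g a b := by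
  refine Tendsto.congr' ?_ hf
  filter_upwards [mem_inf_of_right (mem_principal_self _)] with E hE
  exact sum_congr rfl fun i hi => by rw [hfg (hE.1 i hi).1, hfg (hE.1 i hi).2]

theorem finset_sum {F ι : Type*} [SeminormedAddCommGroup F] {a b : ℝ} (s : Finset ι)
    {f : ι → ℝ → F} (hf : ∀ i ∈ s, AbsolutelyContinuousOnInterval (f i) a b) :
    AbsolutelyContinuousOnInterval (fun x => ∑ i ∈ s, f i x) a b := by
  classical
  induction s using Finset.induction_on with
  | empty =>
    simpa using (LipschitzWith.const (0 : F)).lipschitzOnWith.absolutelyContinuousOnInterval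
  | insert i s hi ih =>
    simp_rw [sum_insert hi]
    exact (hf i (mem_insert_self i s)).fun_add (ih fun j hj => hf j (mem_insert_of_mem hj))

theorem le_of_ae_deriv_nonpos {f : ℝ → ℝ} {a b : ℝ} (hf : AbsolutelyContinuousOnInterval f a b)
    (hab : a ≤ b) (hf' : ∀ᵐ x, x ∈ Ioc a b → deriv f x ≤ 0) : f b ≤ f a := by
  have hint := hf.integral_deriv_eq_sub
  rw [intervalIntegral.integral_of_le hab] at hint
  linarith [setIntegral_nonpos_ae measurableSet_Ioc hf']

end AbsolutelyContinuousOnInterval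

theorem HasDerivAt.nonneg_of_monotoneOn_nhds {f : ℝ → ℝ} {f' t : ℝ} {s : Set ℝ}
    (hd : HasDerivAt f f' t) (hs : s ∈ 𝓝 t) (hf : MonotoneOn f s) : 0 ≤ f' :=
  hd.hasDerivWithinAt.nonneg_of_monotoneOn
    ((PerfectSpace.univ_preperfect t (mem_univ t)).nhds_inter hs) (hf.mono inter_subset_left)

section CollapseGap

variable {I : Type*} [Fintype I] {α y : I → ℝ}

noncomputable def collapseGap (α y z : I → ℝ) : ℝ :=
  ∑ i, α i * (z i - zeta α y i * (y ⬝ᵥ z)) ^ 2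

theorem collapseGap_nonneg (hα : ∀ i, 0 ≤ α i) (z : I → ℝ) : 0 ≤ collapseGap α y z :=
  sum_nonneg fun i _ => mul_nonneg (hα i) (sq_nonneg _)

theorem collapseGap_eq_zero_iff (hα : ∀ i, 0 < α i) {z : I → ℝ} :
    collapseGap α y z = 0 ↔ ∀ i, z i = zeta α y i * (y ⬝ᵥ z) := by
  rw [collapseGap, sum_eq_zero_iff_of_nonneg fun i _ => mul_nonneg (hα i).le (sq_nonneg _)]
  simp [(hα _).ne', sub_eq_zero]

theorem sum_mul_zeta_mul (hα : ∀ i, α i ≠ 0) (w : I → ℝ) :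
    ∑ i, α i * zeta α y i * w i = (y ⬝ᵥ w) / ∑ i, y i ^ 2 / α i := by
  rw [dotProduct, sum_div]
  exact sum_congr rfl fun i _ => by simp only [zeta]; field_simp [hα i]

theorem sum_mul_sub_zeta_mul_sub (hα : ∀ i, α i ≠ 0) (u v : I → ℝ) :
    ∑ i, α i * ((u i - zeta α y i * (y ⬝ᵥ u)) * (v i - zeta α y i * (y ⬝ᵥ v))) =
      ∑ i, α i * u i * v i - (y ⬝ᵥ u) * (y ⬝ᵥ v) / ∑ i, y i ^ 2 / α i := by
  set κ := ∑ i, y i ^ 2 / α i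
  set ζ := zeta α y
  have hyζ : y ⬝ᵥ ζ = κ / κ := by
    rw [dotProduct, sum_div]
    exact sum_congr rfl fun i _ => by simp only [ζ, zeta]; field_simp [hα i]; ring
  have hexpand : ∀ i, α i * ((u i - ζ i * (y ⬝ᵥ u)) * (v i - ζ i * (y ⬝ᵥ v))) =
      α i * u i * v i - (y ⬝ᵥ v) * (α i * ζ i * u i) - (y ⬝ᵥ u) * (α i * ζ i * v i) +
        (y ⬝ᵥ u) * (y ⬝ᵥ v) * (α i * ζ i * ζ i) := fun i => by ring
  have hζ : ∀ w, ∑ i, α i * ζ i * w i = (y ⬝ᵥ w) / κ := sum_mul_zeta_mul hα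
  simp only [hexpand, sum_add_distrib, sum_sub_distrib, ← mul_sum, hζ, hyζ]
  rcases eq_or_ne κ 0 with hκ | hκ
  · simp [hκ]
  · field_simp
    ring

theorem hasDerivAt_collapseGap (hα : ∀ i, α i ≠ 0) {z : ℝ → I → ℝ} {z' : I → ℝ} {t : ℝ}
    (hz : ∀ i, HasDerivAt (fun s => z s i) (z' i) t) :
    HasDerivAt (fun s => collapseGap α y (z s))
      (2 * (∑ i, α i * z t i * z' i - (y ⬝ᵥ z t) * (y ⬝ᵥ z') / ∑ i, y i ^ 2 / α i)) t := by
  have hW : HasDerivAt (fun s => y ⬝ᵥ z s) (y ⬝ᵥ z') t :=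
    HasDerivAt.fun_sum fun i _ => (hz i).const_mul (y i)
  refine (HasDerivAt.fun_sum fun i _ =>
    (((hz i).sub (hW.const_mul (zeta α y i))).pow 2).const_mul (α i)).congr_deriv ?_
  rw [← sum_mul_sub_zeta_mul_sub hα, mul_sum]
  exact sum_congr rfl fun i _ => by simp only [Pi.sub_apply]; push_cast; ring

end CollapseGap

theorem sSup_image_alloc_nonneg {I J K : Type*} [Fintype I] [Fintype J] {R : I → J → ℝ}
    {A : K → J → ℝ} {KI : Finset K} {x : J → ℝ} (hx : x ∈ Alloc A KI)
    (hRx : ∀ i, ∑ j, R i j * x j = 0) (p : I → ℝ) :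
    0 ≤ sSup ((fun a => ∑ i, p i * ∑ j, R i j * a j) '' Alloc A KI) := by
  by_cases hbdd : BddAbove ((fun a => ∑ i, p i * ∑ j, R i j * a j) '' Alloc A KI)
  · exact le_csSup_of_le hbdd ⟨x, hx, rfl⟩ (by simp [hRx])
  · -- junk value: `sSup` of a set of reals that is not bounded above is `0`
    rw [Real.sSup_of_not_bddAbove hbdd]

namespace FluidSol

variable {I J K : Type*} [Fintype I] [Fintype J] [Fintype K] [DecidableEq J] [DecidableEq K]
  {R : I → J → ℝ} {A : K → J → ℝ} {JI : Finset J} {KI : Finset K} {α : I → ℝ}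
  {Z : ℝ → I → ℝ} {T : ℝ → J → ℝ}

theorem activity_sub_le (hfl : FluidSol R A KI α Z T) (hND : NetData A JI KI) {s t : ℝ} (hs : 0 ≤ s)
    (hst : s ≤ t) (j : J) : T t j - T s j ≤ t - s := by
  obtain ⟨k, hk⟩ := hND.2.2 j
  calc T t j - T s j = A k j * (T t j - T s j) := by rw [hk, one_mul]
    _ ≤ ∑ j', A k j' * (T t j' - T s j') :=
      single_le_sum (fun j' _ => mul_nonneg (hND.nonneg k j')
        (sub_nonneg.2 (hfl.2.2.2.2.1 s t hs hst j'))) (mem_univ j)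
    _ ≤ t - s := hfl.2.2.2.1 s t hs hst k

theorem lipschitzOnWith_activity (hfl : FluidSol R A KI α Z T) (hND : NetData A JI KI) (j : J) :
    LipschitzOnWith 1 (fun t => T t j) (Ici 0) := by
  refine LipschitzOnWith.of_dist_le_mul fun s hs t ht => ?_
  rw [NNReal.coe_one, one_mul, Real.dist_eq, Real.dist_eq]
  rcases le_total s t with hst | hts
  · rw [abs_sub_comm, abs_of_nonneg (sub_nonneg.2 (hfl.2.2.2.2.1 s t hs hst j)),
      abs_of_nonpos (sub_nonpos.2 hst), neg_sub]
    exact hfl.activity_sub_le hND hs hst j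
  · rw [abs_of_nonneg (sub_nonneg.2 (hfl.2.2.2.2.1 t s ht hts j)),
      abs_of_nonneg (sub_nonneg.2 hts)]
    exact hfl.activity_sub_le hND ht hts j

theorem absolutelyContinuousOnInterval_state (hfl : FluidSol R A KI α Z T) (hND : NetData A JI KI)
    (i : I) {a b : ℝ} (ha : 0 ≤ a) (hb : 0 ≤ b) :
    AbsolutelyContinuousOnInterval (fun t => Z t i) a b := by
  have hsub : uIcc a b ⊆ Ici 0 := fun t ht => (le_inf ha hb).trans ht.1
  have hT : ∀ j, AbsolutelyContinuousOnInterval (fun t => T t j) a b := fun j =>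
    ((hfl.lipschitzOnWith_activity hND j).mono hsub).absolutelyContinuousOnInterval
  refine AbsolutelyContinuousOnInterval.congr ?_ fun t ht => (hfl.1 t (hsub ht) i).symm
  exact (LipschitzWith.const (Z 0 i)).lipschitzOnWith.absolutelyContinuousOnInterval.fun_sub
    (.finset_sum _ fun j _ => (hT j).const_mul (R i j))

theorem mem_alloc_of_hasDerivAt (hfl : FluidSol R A KI α Z T) {t : ℝ} (ht : 0 < t) {T' : J → ℝ}
    (hT : ∀ j, HasDerivAt (fun s => T s j) (T' j) t) : T' ∈ Alloc A KI := by
  obtain ⟨-, -, hin, hcap, hmono, -⟩ := hfl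
  have hnhds : Ici (0 : ℝ) ∈ 𝓝 t := Ici_mem_nhds ht
  have hload : ∀ k, HasDerivAt (fun s => ∑ j, A k j * T s j) (∑ j, A k j * T' j) t := fun k =>
    HasDerivAt.fun_sum fun j _ => (hT j).const_mul (A k j)
  have hincr : ∀ k s s', ∑ j, A k j * (T s' j - T s j) =
      ∑ j, A k j * T s' j - ∑ j, A k j * T s j := fun k s s' => by
    simp only [mul_sub, sum_sub_distrib]
  have hcap' : ∀ k, ∑ j, A k j * T' j ≤ 1 := fun k => by
    have := ((hasDerivAt_id' t).sub (hload k)).nonneg_of_monotoneOn_nhds hnhds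
      fun s hs s' _ hss' => by
        simp only [Pi.sub_apply]
        linarith [hincr k s s', hcap s s' hs hss' k]
    linarith
  refine ⟨fun j => (hT j).nonneg_of_monotoneOn_nhds hnhds
    fun s hs s' _ hss' => hmono s s' hs hss' j, hcap', fun k hk => le_antisymm (hcap' k) ?_⟩
  have := ((hload k).sub (hasDerivAt_id' t)).nonneg_of_monotoneOn_nhds hnhds
    fun s hs s' _ hss' => by
      simp only [Pi.sub_apply]
      linarith [hincr k s s', hin s s' hs hss' k hk]
  linarith

theorem hasDerivAt_state (hfl : FluidSol R A KI α Z T) {t : ℝ} (ht : 0 < t) {T' : J → ℝ}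
    (hT : ∀ j, HasDerivAt (fun s => T s j) (T' j) t) (i : I) :
    HasDerivAt (fun s => Z s i) (-∑ j, R i j * T' j) t :=
  ((HasDerivAt.fun_sum fun j _ => (hT j).const_mul (R i j)).const_sub (Z 0 i)).congr_of_eventuallyEq
    (by filter_upwards [Ioi_mem_nhds ht] with s hs using hfl.1 s hs.le i)

variable {y : I → ℝ}

theorem deriv_collapseGap_nonpos (hfl : FluidSol R A KI α Z T) (hα : ∀ i, 0 < α i) (hy : 0 ≤ y)
    (hyR : ∀ a ∈ Alloc A KI, y ⬝ᵥ (R *ᵥ a) ≤ 0) {x : J → ℝ} (hx : x ∈ Alloc A KI)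
    (hRx : ∀ i, ∑ j, R i j * x j = 0) {t : ℝ} (ht : 0 < t)
    (hT : ∀ j, DifferentiableAt ℝ (fun s => T s j) t) :
    deriv (fun s => collapseGap α y (Z s)) t ≤ 0 := by
  set T' : J → ℝ := fun j => deriv (fun s => T s j) t
  have hT' : ∀ j, HasDerivAt (fun s => T s j) (T' j) t := fun j => (hT j).hasDerivAt
  have hZ' := hfl.hasDerivAt_state ht hT'
  have hpressure : 0 ≤ ∑ i, α i * Z t i * ∑ j, R i j * T' j := by
    rw [hfl.2.2.2.2.2.2 t ht _ _ hZ' hT']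
    exact sSup_image_alloc_nonneg hx hRx _
  have hW : 0 ≤ y ⬝ᵥ Z t := dotProduct_nonneg_of_nonneg hy (hfl.2.1 t ht.le)
  have hW' : 0 ≤ y ⬝ᵥ -(R *ᵥ T') := by
    rw [dotProduct_neg]
    linarith [hyR T' (hfl.mem_alloc_of_hasDerivAt ht hT')]
  have hκ : 0 ≤ ∑ i, y i ^ 2 / α i := sum_nonneg fun i _ => div_nonneg (sq_nonneg _) (hα i).le
  rw [(hasDerivAt_collapseGap (fun i => (hα i).ne') hZ').deriv]
  have hneg : ∑ i, α i * Z t i * -∑ j, R i j * T' j = -∑ i, α i * Z t i * ∑ j, R i j * T' j := by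
    simp only [mul_neg, sum_neg_distrib]
  have hprod : 0 ≤ (y ⬝ᵥ Z t) * (y ⬝ᵥ -(R *ᵥ T')) / ∑ i, y i ^ 2 / α i :=
    div_nonneg (mul_nonneg hW hW') hκ
  change 2 * (_ - (y ⬝ᵥ Z t) * (y ⬝ᵥ -(R *ᵥ T')) / _) ≤ 0
  linarith

theorem absolutelyContinuousOnInterval_collapseGap (hfl : FluidSol R A KI α Z T)
    (hND : NetData A JI KI) {a b : ℝ} (ha : 0 ≤ a) (hb : 0 ≤ b) :
    AbsolutelyContinuousOnInterval (fun s => collapseGap α y (Z s)) a b := by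
  have hZ := fun i => hfl.absolutelyContinuousOnInterval_state hND i ha hb
  have hW : AbsolutelyContinuousOnInterval (fun s => y ⬝ᵥ Z s) a b :=
    .finset_sum _ fun i _ => (hZ i).const_mul (y i)
  have hE : ∀ i, AbsolutelyContinuousOnInterval
      (fun s => Z s i - zeta α y i * (y ⬝ᵥ Z s)) a b := fun i =>
    (hZ i).fun_sub (hW.const_mul _)
  simp only [collapseGap, sq]
  exact .finset_sum _ fun i _ => ((hE i).fun_mul (hE i)).const_mul (α i)

theorem collapseGap_le (hfl : FluidSol R A KI α Z T) (hND : NetData A JI KI)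
    (hα : ∀ i, 0 < α i) (hy : 0 ≤ y) (hyR : ∀ a ∈ Alloc A KI, y ⬝ᵥ (R *ᵥ a) ≤ 0)
    {x : J → ℝ} (hx : x ∈ Alloc A KI) (hRx : ∀ i, ∑ j, R i j * x j = 0) {τ b : ℝ} (hτ : 0 ≤ τ)
    (hτb : τ ≤ b) : collapseGap α y (Z b) ≤ collapseGap α y (Z τ) := by
  refine (hfl.absolutelyContinuousOnInterval_collapseGap hND hτ
    (hτ.trans hτb)).le_of_ae_deriv_nonpos hτb ?_
  have hsub : uIcc τ b ⊆ Ici 0 := fun t ht => (le_inf hτ (hτ.trans hτb)).trans ht.1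
  have hT : ∀ᵐ s, ∀ j, s ∈ uIcc τ b → DifferentiableAt ℝ (fun s => T s j) s :=
    ae_all_iff.2 fun j => ((hfl.lipschitzOnWith_activity hND j).mono
      hsub).absolutelyContinuousOnInterval.ae_differentiableAt
  filter_upwards [hT] with s hs hsI
  refine hfl.deriv_collapseGap_nonpos hα hy hyR hx hRx (hτ.trans_lt hsI.1) fun j => hs j ?_
  rw [uIcc_of_le hτb]
  exact Ioc_subset_Icc_self hsI

end FluidSol

theorem fluid_state_space_collapse_propagates_general {I J K : Type*} [Fintype I] [Fintype J] [Fintype K] [DecidableEq J] [DecidableEq K]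
    (R : I → J → ℝ) (A : K → J → ℝ) (JI : Finset J) (KI : Finset K)
    (hND : NetData A JI KI)
    (α : I → ℝ) (hα : ∀ i, 0 < α i)
    (xstar : J → ℝ) (hSPP : SPPuniqueOpt R A KI 1 xstar)
    (ystar : I → ℝ) (zstar : K → ℝ) (hD : DuniqueOpt R A JI KI ystar zstar)
    (hynn : ∀ i, 0 ≤ ystar i)
    (Z : ℝ → I → ℝ) (T : ℝ → J → ℝ) (hfluid : FluidSol R A KI α Z T)
    (τ₁ : ℝ) (hτ₁ : 0 ≤ τ₁)
    (hcollapse : ∀ i, Z τ₁ i = zeta α ystar i * ∑ i', ystar i' * Z τ₁ i') :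
    ∀ t, τ₁ ≤ t → ∀ i, Z t i = zeta α ystar i * ∑ i', ystar i' * Z t i' := by
  have hdual : 1 ≤ ∑ k ∈ KI, zstar k := hSPP.1.le_sum_of_dopt hND hD.1
  have hgap_le : ∀ t, τ₁ ≤ t → collapseGap α ystar (Z t) ≤ collapseGap α ystar (Z τ₁) :=
    fun t ht => hfluid.collapseGap_le hND hα hynn
      (fun a ha => hD.1.1.dotProduct_mulVec_nonpos hND hdual ha) (hSPP.1.1.mem_alloc le_rfl)
      hSPP.1.1.1 hτ₁ ht
  intro t ht
  refine (collapseGap_eq_zero_iff hα).1 (le_antisymm ?_ (collapseGap_nonneg (fun i => (hα i).le) _))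
  exact (hgap_le t ht).trans ((collapseGap_eq_zero_iff hα).2 hcollapse).le

/-- Theorem 6, second part: if the fluid model solution exhibits the state
space collapse at some time `τ₁ ≥ 0`, then it does so at all later times. -/
theorem fluid_state_space_collapse_propagates {I J K : Type*} [Fintype I] [Fintype J] [Fintype K] [DecidableEq J] [DecidableEq K]
    (R : I → J → ℝ) (A : K → J → ℝ) (JI : Finset J) (KI : Finset K)
    (hND : NetData A JI KI)
    (α : I → ℝ) (hα : ∀ i, 0 < α i)
    (xstar : J → ℝ) (hSPP : SPPuniqueOpt R A KI 1 xstar)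
    (ystar : I → ℝ) (zstar : K → ℝ) (hD : DuniqueOpt R A JI KI ystar zstar)
    (hynn : ∀ i, 0 ≤ ystar i) (hznn : ∀ k, 0 ≤ zstar k)
    (Z : ℝ → I → ℝ) (T : ℝ → J → ℝ) (hfluid : FluidSol R A KI α Z T)
    (τ₁ : ℝ) (hτ₁ : 0 ≤ τ₁)
    (hcollapse : ∀ i, Z τ₁ i = zeta α ystar i * ∑ i', ystar i' * Z τ₁ i') :
    ∀ t, τ₁ ≤ t → ∀ i, Z t i = zeta α ystar i * ∑ i', ystar i' * Z t i' :=
  fluid_state_space_collapse_propagates_general R A JI KI hND α hα xstar hSPP ystar zstar hD hynn Z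
    T hfluid τ₁ hτ₁ hcollapse
end

section
/- Consider a sequence of network data (R^r, A), r ∈ ℕ, and limit data (R, A), sharing the same index sets and consumption matrix A, with R^r → R entrywise as r → ∞. Assume: the static planning problem for (R, A) has a unique optimal solution (ρ*, x*) with ρ* = 1; for each r the dual problem for (R^r, A) has a unique optimal solution (y^r, z^r), which is nonnegative, and the optimal value ρ^r of the static planning problem for (R^r, A) converges to 1; and the dual problem for (R, A) has a unique optimal solution (y*, z*), which is nonnegative. Then (y^r, z^r) → (y*, z*) as r → ∞. -/
/-!
The dual optima stay in a compact set. The service part of `z^r` has total mass one and, by weak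
duality, its input part is bounded by `ρ^r`. If `y^r` were unbounded, the normalised vectors
`y^r / ‖y^r‖` would accumulate at some `u ≠ 0` with `uᵀR ≤ 0`, and `(y* + u, z*)` would be a second
optimum of the limit dual. A limit point of `(y^r, z^r)` is dual feasible for `R` because the dual
constraints are closed, and it is optimal: a dual feasible `(y, z)` for `R`, with `z` shifted by
`-δ` on input and `+δ` on service processors and everything divided by `1 + |𝒦_S| δ`, is dual
feasible for `R^r` as soon as `δ` bounds `yᵀ(R^r - R)`, and its value tends to that of `(y, z)` as
`δ → 0`. Uniqueness of `(y*, z*)` then forces convergence.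
-/

open Finset

open Filter Topology

lemma tendsto_sum_mul {ι I J : Type*} [Fintype I] {l : Filter ι} {yn : ι → I → ℝ}
    {Rn : ι → I → J → ℝ} {y : I → ℝ} {R : I → J → ℝ} (hy : Tendsto yn l (𝓝 y))
    (hR : Tendsto Rn l (𝓝 R)) (j : J) :
    Tendsto (fun n => ∑ i, yn n i * Rn n i j) l (𝓝 (∑ i, y i * R i j)) :=
  tendsto_finsetSum _ fun i _ =>
    (tendsto_pi_nhds.1 hy i).mul (tendsto_pi_nhds.1 (tendsto_pi_nhds.1 hR i) j)

lemma exists_eventually_norm_le_of_sum_mul_le {I J : Type*} [Fintype I] {R : I → J → ℝ}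
    (hR0 : ∀ u : I → ℝ, (∀ j, ∑ i, u i * R i j ≤ 0) → u = 0) {Rn : ℕ → I → J → ℝ}
    (hR : Tendsto Rn atTop (𝓝 R)) {yn : ℕ → I → ℝ} {B : ℝ}
    (hB : ∀ n j, ∑ i, yn n i * Rn n i j ≤ B) :
    ∃ C, ∀ᶠ n in atTop, ‖yn n‖ ≤ C := by
  by_contra! hunb
  obtain ⟨φ, hφ, hφn⟩ := extraction_forall_of_frequently fun n : ℕ => by
    simpa only [not_eventually, not_le] using hunb n
  have hpos (n : ℕ) : 0 < ‖yn (φ n)‖ := (Nat.cast_nonneg n).trans_lt (hφn n)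
  have hsphere (n : ℕ) : ‖yn (φ n)‖⁻¹ • yn (φ n) ∈ Metric.sphere (0 : I → ℝ) 1 := by
    simp [norm_smul, (hpos n).ne']
  obtain ⟨u, hu, ψ, hψ, hlim⟩ := (isCompact_sphere _ _).tendsto_subseq hsphere
  refine Metric.ne_of_mem_sphere hu one_ne_zero (hR0 u fun j => ?_)
  have hinv : Tendsto (fun n => ‖yn (φ (ψ n))‖⁻¹) atTop (𝓝 0) :=
    ((tendsto_atTop_mono (fun n => (hφn n).le) tendsto_natCast_atTop_atTop).comp
      hψ.tendsto_atTop).inv_tendsto_atTop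
  refine le_of_tendsto_of_tendsto' (tendsto_sum_mul hlim (hR.comp (hφ.comp hψ).tendsto_atTop) j)
    (by simpa using hinv.mul_const B) fun n => ?_
  simp only [Function.comp_apply, Pi.smul_apply, smul_eq_mul, mul_assoc, ← mul_sum]
  exact mul_le_mul_of_nonneg_left (hB _ j) (inv_nonneg.2 (norm_nonneg _))

namespace NetData

variable {J K : Type*} {A : K → J → ℝ} {JI : Finset J} {KI : Finset K}

lemma nonneg_s4 (hND : NetData A JI KI) (k : K) (j : J) : 0 ≤ A k j := by
  rcases hND.1 k j with h | h <;> simp [h]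

lemma le_one (hND : NetData A JI KI) (k : K) (j : J) : A k j ≤ 1 := by
  rcases hND.1 k j with h | h <;> simp [h]

lemma one_le_sum (hND : NetData A JI KI) {j : J} {s : Finset K} (hs : ∀ k ∉ s, A k j = 0) :
    1 ≤ ∑ k ∈ s, A k j := by
  obtain ⟨k, hk⟩ := hND.2.2 j
  have hks : k ∈ s := by
    by_contra h
    simp [hs k h] at hk
  exact hk.symm.le.trans (single_le_sum (fun k _ => hND.nonneg_s4 k j) hks)

end NetData

section Dual

variable {I J K : Type*} [Fintype I] [Fintype K] [DecidableEq K]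
  {R : I → J → ℝ} {A : K → J → ℝ} {JI : Finset J} {KI : Finset K} {y : I → ℝ} {z : K → ℝ}

-- Both families of dual constraints at once: the cross terms vanish by `NetData`.
lemma Dfeas.sum_mul_le (hND : NetData A JI KI) (h : Dfeas R A JI KI y z) (j : J) :
    ∑ i, y i * R i j ≤ ∑ k ∈ KIᶜ, z k * A k j - ∑ k ∈ KI, z k * A k j := by
  by_cases hj : j ∈ JI
  · have hserv : ∑ k ∈ KIᶜ, z k * A k j = 0 := sum_eq_zero fun k hk => by
      rw [hND.2.1 k j (Or.inr ⟨mem_compl.1 hk, hj⟩), mul_zero]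
    linarith [h.1 j hj]
  · have hin : ∑ k ∈ KI, z k * A k j = 0 := sum_eq_zero fun k hk => by
      rw [hND.2.1 k j (Or.inl ⟨hk, hj⟩), mul_zero]
    linarith [h.2.1 j hj]

lemma Dfeas.sum_le_of_SPPfeas [Fintype J] (hND : NetData A JI KI) (h : Dfeas R A JI KI y z)
    {ρ : ℝ} {x : J → ℝ} (hx : SPPfeas R A KI ρ x) : ∑ k ∈ KI, z k ≤ ρ := by
  obtain ⟨hRx, hin, hserv, hx0⟩ := hx
  have hswap (s : Finset K) :
      ∑ j, (∑ k ∈ s, z k * A k j) * x j = ∑ k ∈ s, z k * ∑ j, A k j * x j := by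
    simp only [sum_mul, mul_sum, mul_assoc]
    exact sum_comm
  have hzero : ∑ j, (∑ i, y i * R i j) * x j = 0 := by
    simp only [sum_mul, mul_assoc]
    rw [sum_comm]
    simp [← mul_sum, hRx]
  have hgap : 0 ≤ ρ - ∑ k ∈ KI, z k := calc
    0 = ∑ j, (∑ i, y i * R i j) * x j := hzero.symm
    _ ≤ ∑ j, (∑ k ∈ KIᶜ, z k * A k j - ∑ k ∈ KI, z k * A k j) * x j :=
      sum_le_sum fun j _ => mul_le_mul_of_nonneg_right (h.sum_mul_le hND j) (hx0 j)
    _ = ∑ k ∈ KIᶜ, z k * ∑ j, A k j * x j - ∑ k ∈ KI, z k := by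
      simp only [sub_mul, sum_sub_distrib, hswap, sub_right_inj]
      exact sum_congr rfl fun k hk => by rw [hin k hk, mul_one]
    _ ≤ ∑ k ∈ KIᶜ, z k * ρ - ∑ k ∈ KI, z k := by
      gcongr with k hk
      · exact h.2.2.2 k (mem_compl.1 hk)
      · exact hserv k (mem_compl.1 hk)
    _ = ρ - ∑ k ∈ KI, z k := by rw [← sum_mul, h.2.2.1]; simp
  linarith

lemma Dfeas.sum_mul_le_one (hND : NetData A JI KI) (h : Dfeas R A JI KI y z)
    (hz : ∀ k, 0 ≤ z k) (j : J) : ∑ i, y i * R i j ≤ 1 :=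
  calc ∑ i, y i * R i j ≤ ∑ k ∈ KIᶜ, z k * A k j - ∑ k ∈ KI, z k * A k j := h.sum_mul_le hND j
    _ ≤ ∑ k ∈ KIᶜ, z k * 1 - 0 :=
      sub_le_sub (sum_le_sum fun k _ => mul_le_mul_of_nonneg_left (hND.le_one k j) (hz k))
        (sum_nonneg fun k _ => mul_nonneg (hz k) (hND.nonneg_s4 k j))
    _ = 1 := by simp [h.2.2.1]

lemma Dfeas.le_max_of_SPPfeas [Fintype J] (hND : NetData A JI KI) (h : Dfeas R A JI KI y z)
    (hz : ∀ k, 0 ≤ z k) {ρ : ℝ} {x : J → ℝ} (hx : SPPfeas R A KI ρ x) (k : K) :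
    z k ≤ max 1 ρ := by
  by_cases hk : k ∈ KI
  · exact ((single_le_sum (fun k _ => hz k) hk).trans (h.sum_le_of_SPPfeas hND hx)).trans
      (le_max_right _ _)
  · exact ((single_le_sum (fun k _ => hz k) (mem_compl.2 hk)).trans h.2.2.1.le).trans
      (le_max_left _ _)

lemma dfeas_inv_smul {w : K → ℝ} {s : ℝ} (hs : 0 < s)
    (hin : ∀ j ∈ JI, ∑ i, y i * R i j ≤ -∑ k ∈ KI, w k * A k j)
    (hserv : ∀ j ∉ JI, ∑ i, y i * R i j ≤ ∑ k ∈ KIᶜ, w k * A k j)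
    (hsum : ∑ k ∈ KIᶜ, w k = s) (hw : ∀ k ∉ KI, 0 ≤ w k) :
    Dfeas R A JI KI (s⁻¹ • y) (s⁻¹ • w) := by
  have hs' : 0 ≤ s⁻¹ := inv_nonneg.2 hs.le
  simp only [Dfeas, Pi.smul_apply, smul_eq_mul, mul_assoc, ← mul_sum]
  refine ⟨fun j hj => ?_, fun j hj => ?_, ?_, fun k hk => mul_nonneg hs' (hw k hk)⟩
  · rw [← mul_neg]
    exact mul_le_mul_of_nonneg_left (hin j hj) hs'
  · exact mul_le_mul_of_nonneg_left (hserv j hj) hs'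
  · rw [hsum, inv_mul_cancel₀ hs.ne']

lemma Dfeas.perturb (hND : NetData A JI KI) (h : Dfeas R A JI KI y z) {R' : I → J → ℝ}
    {δ : ℝ} (hδ : 0 ≤ δ) (hR' : ∀ j, ∑ i, y i * R' i j ≤ ∑ i, y i * R i j + δ) :
    Dfeas R' A JI KI ((1 + #KIᶜ * δ)⁻¹ • y)
      ((1 + #KIᶜ * δ)⁻¹ • fun k => if k ∈ KI then z k - δ else z k + δ) := by
  obtain ⟨hin, hserv, hsum, hz⟩ := h
  apply dfeas_inv_smul (by positivity)
  · intro j hj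
    have hA := hND.one_le_sum (s := KI) fun k hk => hND.2.1 k j (Or.inr ⟨hk, hj⟩)
    have hshift : ∑ k ∈ KI, (if k ∈ KI then z k - δ else z k + δ) * A k j =
        ∑ k ∈ KI, z k * A k j - δ * ∑ k ∈ KI, A k j := by
      rw [mul_sum, ← sum_sub_distrib]
      exact sum_congr rfl fun k hk => by rw [if_pos hk]; ring
    rw [hshift]
    nlinarith [hR' j, hin j hj]
  · intro j hj
    have hA := hND.one_le_sum (s := KIᶜ) fun k hk =>
      hND.2.1 k j (Or.inl ⟨notMem_compl.1 hk, hj⟩)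
    have hshift : ∑ k ∈ KIᶜ, (if k ∈ KI then z k - δ else z k + δ) * A k j =
        ∑ k ∈ KIᶜ, z k * A k j + δ * ∑ k ∈ KIᶜ, A k j := by
      rw [mul_sum, ← sum_add_distrib]
      exact sum_congr rfl fun k hk => by rw [if_neg (mem_compl.1 hk)]; ring
    rw [hshift]
    nlinarith [hR' j, hserv j hj]
  · rw [sum_congr rfl fun k hk => if_neg (mem_compl.1 hk), sum_add_distrib, hsum, sum_const,
      nsmul_eq_mul]
  · intro k hk
    rw [if_neg hk]
    linarith [hz k hk]

lemma Dfeas.of_tendsto {ι : Type*} {l : Filter ι} [l.NeBot] {Rn : ι → I → J → ℝ}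
    {yn : ι → I → ℝ} {zn : ι → K → ℝ} (hR : Tendsto Rn l (𝓝 R)) (hy : Tendsto yn l (𝓝 y))
    (hz : Tendsto zn l (𝓝 z)) (h : ∀ n, Dfeas (Rn n) A JI KI (yn n) (zn n)) :
    Dfeas R A JI KI y z := by
  have hzk (k : K) : Tendsto (fun n => zn n k) l (𝓝 (z k)) := tendsto_pi_nhds.1 hz k
  have hzA (s : Finset K) (j : J) :
      Tendsto (fun n => ∑ k ∈ s, zn n k * A k j) l (𝓝 (∑ k ∈ s, z k * A k j)) :=
    tendsto_finsetSum _ fun k _ => (hzk k).mul_const _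
  refine ⟨fun j hj => ?_, fun j hj => ?_, ?_, fun k hk => ?_⟩
  · exact le_of_tendsto_of_tendsto' (tendsto_sum_mul hy hR j) (hzA KI j).neg
      fun n => (h n).1 j hj
  · exact le_of_tendsto_of_tendsto' (tendsto_sum_mul hy hR j) (hzA KIᶜ j)
      fun n => (h n).2.1 j hj
  · exact tendsto_nhds_unique (tendsto_finsetSum _ fun k _ => hzk k)
      (tendsto_const_nhds.congr fun n => ((h n).2.2.1).symm)
  · exact ge_of_tendsto' (hzk k) fun n => (h n).2.2.2 k hk

lemma Dfeas.sum_le_of_tendsto [Fintype J] (hND : NetData A JI KI) (h : Dfeas R A JI KI y z)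
    {ι : Type*} {l : Filter ι} [l.NeBot] {Rn : ι → I → J → ℝ} {yn : ι → I → ℝ} {zn : ι → K → ℝ}
    (hR : Tendsto Rn l (𝓝 R)) (hopt : ∀ n, Dopt (Rn n) A JI KI (yn n) (zn n)) {v : ℝ}
    (hv : Tendsto (fun n => ∑ k ∈ KI, zn n k) l (𝓝 v)) : ∑ k ∈ KI, z k ≤ v := by
  set δ : ι → ℝ := fun n => ∑ j, |∑ i, y i * Rn n i j - ∑ i, y i * R i j|
  have hδ : Tendsto δ l (𝓝 0) := by
    simpa using tendsto_finsetSum univ fun j _ =>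
      ((tendsto_sum_mul (tendsto_const_nhds (x := y)) hR j).sub_const (∑ i, y i * R i j)).abs
  have hR' (n : ι) (j : J) : ∑ i, y i * Rn n i j ≤ ∑ i, y i * R i j + δ n := by
    have := single_le_sum (f := fun j => |∑ i, y i * Rn n i j - ∑ i, y i * R i j|)
      (fun j _ => abs_nonneg _) (mem_univ j)
    linarith [le_abs_self (∑ i, y i * Rn n i j - ∑ i, y i * R i j)]
  have hlower (n : ι) :
      (1 + #KIᶜ * δ n)⁻¹ * (∑ k ∈ KI, z k - #KI * δ n) ≤ ∑ k ∈ KI, zn n k := by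
    refine le_of_eq_of_le ?_
      ((hopt n).2 _ _ (h.perturb hND (sum_nonneg fun j _ => abs_nonneg _) (hR' n)))
    simp only [Pi.smul_apply, smul_eq_mul, ← mul_sum]
    rw [sum_congr rfl fun k hk => if_pos hk, sum_sub_distrib, sum_const, nsmul_eq_mul]
  have hlim : Tendsto (fun n => (1 + #KIᶜ * δ n)⁻¹ * (∑ k ∈ KI, z k - #KI * δ n)) l
      (𝓝 (∑ k ∈ KI, z k)) := by
    have := ((tendsto_const_nhds (x := (1 : ℝ))).add (hδ.const_mul (#KIᶜ : ℝ))).inv₀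
      (by simp) |>.mul ((tendsto_const_nhds (x := ∑ k ∈ KI, z k)).sub (hδ.const_mul (#KI : ℝ)))
    simpa using this
  exact le_of_tendsto_of_tendsto' hlim hv hlower

lemma Dopt.of_tendsto [Fintype J] (hND : NetData A JI KI) {ι : Type*} {l : Filter ι} [l.NeBot]
    {Rn : ι → I → J → ℝ} {yn : ι → I → ℝ} {zn : ι → K → ℝ} (hR : Tendsto Rn l (𝓝 R))
    (hy : Tendsto yn l (𝓝 y)) (hz : Tendsto zn l (𝓝 z))
    (hopt : ∀ n, Dopt (Rn n) A JI KI (yn n) (zn n)) : Dopt R A JI KI y z :=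
  ⟨.of_tendsto hR hy hz fun n => (hopt n).1, fun _ _ h' => h'.sum_le_of_tendsto hND hR hopt
    (tendsto_finsetSum _ fun k _ => tendsto_pi_nhds.1 hz k)⟩

lemma DuniqueOpt.eq_zero_of_sum_mul_nonpos (hD : DuniqueOpt R A JI KI y z) {u : I → ℝ}
    (hu : ∀ j, ∑ i, u i * R i j ≤ 0) : u = 0 := by
  obtain ⟨⟨⟨hin, hserv, hsum, hz⟩, hmax⟩, huniq⟩ := hD
  have hsplit (j : J) : ∑ i, (y + u) i * R i j = ∑ i, y i * R i j + ∑ i, u i * R i j := by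
    simp only [Pi.add_apply, add_mul, sum_add_distrib]
  have hfeas : Dfeas R A JI KI (y + u) z :=
    ⟨fun j hj => by linarith [hsplit j, hin j hj, hu j],
      fun j hj => by linarith [hsplit j, hserv j hj, hu j], hsum, hz⟩
  simpa using (huniq _ _ ⟨hfeas, hmax⟩).1

end Dual

open Filter in
theorem dual_opt_convergence_general {I J K : Type*} [Fintype I] [Fintype J] [Fintype K] [DecidableEq K]
    (R : I → J → ℝ) (A : K → J → ℝ) (JI : Finset J) (KI : Finset K)
    (hND : NetData A JI KI)
    (Rseq : ℕ → I → J → ℝ)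
    (hconv : ∀ i j, Tendsto (fun r => Rseq r i j) atTop (nhds (R i j)))
    (yr : ℕ → I → ℝ) (zr : ℕ → K → ℝ)
    (hDr : ∀ r, DuniqueOpt (Rseq r) A JI KI (yr r) (zr r))
    (hzrnn : ∀ r k, 0 ≤ zr r k)
    (ρr : ℕ → ℝ) (hρr : ∀ r, ∃ x, SPPopt (Rseq r) A KI (ρr r) x)
    (hρconv : Tendsto ρr atTop (nhds 1))
    (ystar : I → ℝ) (zstar : K → ℝ) (hD : DuniqueOpt R A JI KI ystar zstar) :
    (∀ i, Tendsto (fun r => yr r i) atTop (nhds (ystar i))) ∧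
    (∀ k, Tendsto (fun r => zr r k) atTop (nhds (zstar k))) := by
  have hR : Tendsto Rseq atTop (𝓝 R) := tendsto_pi_nhds.2 fun i => tendsto_pi_nhds.2 (hconv i)
  obtain ⟨M, hM⟩ := hρconv.bddAbove_range
  have hzr (r : ℕ) : zr r ∈ Set.Icc 0 fun _ => max 1 M := by
    obtain ⟨x, hx⟩ := hρr r
    refine ⟨hzrnn r, fun k => ((hDr r).1.1.le_max_of_SPPfeas hND (hzrnn r) hx.1 k).trans ?_⟩
    exact max_le_max_left 1 (hM ⟨r, rfl⟩)
  obtain ⟨C, hC⟩ := exists_eventually_norm_le_of_sum_mul_le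
    (fun _ => hD.eq_zero_of_sum_mul_nonpos) hR fun r => (hDr r).1.1.sum_mul_le_one hND (hzrnn r)
  have hlim : Tendsto (fun r => (yr r, zr r)) atTop (𝓝 (ystar, zstar)) := by
    refine ((isCompact_closedBall 0 C).prod isCompact_Icc).tendsto_nhds_of_unique_mapClusterPt
      (hC.mono fun r hr => ⟨mem_closedBall_zero_iff.2 hr, hzr r⟩) fun p _ hp => ?_
    obtain ⟨ψ, hψ, hpψ⟩ := hp.tendsto_subseq
    have hopt := Dopt.of_tendsto hND (hR.comp hψ.tendsto_atTop) hpψ.fst_nhds hpψ.snd_nhds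
      fun n => (hDr (ψ n)).1
    exact Prod.ext_iff.2 (hD.2 _ _ hopt)
  exact ⟨tendsto_pi_nhds.1 hlim.fst_nhds, tendsto_pi_nhds.1 hlim.snd_nhds⟩

open Filter in
/-- Lemma 1: convergence of the dual optimal solutions `(y^r, z^r)` to the dual
optimal solution `(y*, z*)` of the limit network. -/
theorem dual_opt_convergence {I J K : Type*} [Fintype I] [Fintype J] [Fintype K] [DecidableEq J] [DecidableEq K]
    (R : I → J → ℝ) (A : K → J → ℝ) (JI : Finset J) (KI : Finset K)
    (hND : NetData A JI KI)
    (Rseq : ℕ → I → J → ℝ)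
    (hconv : ∀ i j, Tendsto (fun r => Rseq r i j) atTop (nhds (R i j)))
    (xstar : J → ℝ) (hSPP : SPPuniqueOpt R A KI 1 xstar)
    (yr : ℕ → I → ℝ) (zr : ℕ → K → ℝ)
    (hDr : ∀ r, DuniqueOpt (Rseq r) A JI KI (yr r) (zr r))
    (hyrnn : ∀ r i, 0 ≤ yr r i) (hzrnn : ∀ r k, 0 ≤ zr r k)
    (ρr : ℕ → ℝ) (hρr : ∀ r, ∃ x, SPPopt (Rseq r) A KI (ρr r) x)
    (hρconv : Tendsto ρr atTop (nhds 1))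
    (ystar : I → ℝ) (zstar : K → ℝ) (hD : DuniqueOpt R A JI KI ystar zstar)
    (hynn : ∀ i, 0 ≤ ystar i) (hznn : ∀ k, 0 ≤ zstar k) :
    (∀ i, Tendsto (fun r => yr r i) atTop (nhds (ystar i))) ∧
    (∀ k, Tendsto (fun r => zr r k) atTop (nhds (zstar k))) :=
  dual_opt_convergence_general R A JI KI hND Rseq hconv yr zr hDr hzrnn ρr hρr hρconv ystar zstar hD
end

section
/- Let ℐ be a finite index set, y* ∈ ℝ^ℐ nonzero with y* ≥ 0, α ∈ ℝ^ℐ with α_i > 0 for all i, and let ζ^α_i = (y*_i/α_i)/(Σ_{i'} (y*_{i'})²/α_{i'}). Let V ⊆ ℝ^ℐ be a compact convex set containing 0 such that max_{v∈V} Σ_i y*_i v_i = 0, and suppose there is δ > 0 such that every v with Σ_i y*_i v_i = 0 and Euclidean norm ‖v‖ ≤ δ lies in V. Let z ∈ ℝ^ℐ with z ≥ 0, set w = Σ_i y*_i z_i, z* = ζ^α w, and f = Σ_i α_i (z_i − z*_i)². If z ≠ z*, then for every v ∈ V attaining max_{v'∈V} Σ_i α_i z_i v'_i, one has Σ_i α_i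 (z_i − z*_i)(−v_i) ≤ −δ f/‖z − z*‖ ≤ −δ √(min_i α_i) √f. -/
/-!
Write `d = z - z*`, `w = ∑ y_i z_i` and `S = ∑ y_i² / α_i`. Since `α_i ζ_i = y_i / S`, the weighted
vector `α z` splits as `α d + (w / S) y`, and `∑ y_i ζ_i = 1` makes `d` orthogonal to `y`. Hence
`u = δ d / ‖d‖` lies in `V`, and as `(w / S) ∑ y_i v_i ≤ 0 = (w / S) ∑ y_i u_i`, maximality of `v`
gives `∑ α_i d_i v_i ≥ ∑ α_i d_i u_i = δ f / ‖d‖`. The second bound is `f ≥ (min α) ‖d‖²`.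
-/

open Finset

section Zeta

variable {I : Type*} [Fintype I] {α y : I → ℝ}

theorem mul_zeta_apply {i : I} (hαi : α i ≠ 0) :
    α i * zeta α y i = y i / ∑ i', y i' ^ 2 / α i' := by
  rw [zeta, mul_div_assoc', mul_div_cancel₀ _ hαi]

theorem sum_sq_div_pos (hα : ∀ i, 0 < α i) (hy : y ≠ 0) : 0 < ∑ i, y i ^ 2 / α i := by
  obtain ⟨i, hi⟩ := Function.ne_iff.mp hy
  exact sum_pos' (fun j _ => div_nonneg (sq_nonneg _) (hα j).le)
    ⟨i, mem_univ i, div_pos (sq_pos_of_ne_zero hi) (hα i)⟩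

theorem sum_mul_zeta (hα : ∀ i, 0 < α i) (hy : y ≠ 0) : ∑ i, y i * zeta α y i = 1 := by
  have hS := (sum_sq_div_pos hα hy).ne'
  simp only [zeta, mul_div_assoc', ← sum_div]
  rw [← div_self hS]
  congr 1
  exact sum_congr rfl fun i _ => by ring

theorem sum_mul_sub_zeta_mul_eq_zero (hα : ∀ i, 0 < α i) (hy : y ≠ 0) (z : I → ℝ) :
    ∑ i, y i * (z i - zeta α y i * ∑ i', y i' * z i') = 0 := by
  simp only [mul_sub, sum_sub_distrib, ← mul_assoc, ← sum_mul, sum_mul_zeta hα hy, one_mul,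
    sub_self]

theorem sum_mul_mul_eq_sub_zeta_add (hα : ∀ i, α i ≠ 0) (c : ℝ) (z v : I → ℝ) :
    ∑ i, α i * z i * v i =
      ∑ i, α i * (z i - zeta α y i * c) * v i + c / (∑ i, y i ^ 2 / α i) * ∑ i, y i * v i := by
  rw [mul_sum, ← sum_add_distrib]
  refine sum_congr rfl fun i _ => ?_
  rw [mul_sub, ← mul_assoc, mul_zeta_apply (hα i)]
  ring

end Zeta

theorem sqrt_sum_sq_div_sqrt_mul_le {I : Type*} [Fintype I] {δ : ℝ} (hδ : 0 ≤ δ) (d : I → ℝ) :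
    √(∑ i, (δ / √(∑ j, d j ^ 2) * d i) ^ 2) ≤ δ := by
  simp only [mul_pow, ← mul_sum]
  rw [Real.sqrt_mul (sq_nonneg _), Real.sqrt_sq (by positivity)]
  rcases (Real.sqrt_nonneg (∑ j, d j ^ 2)).eq_or_lt with h | h
  · rw [← h]; simpa using hδ
  · rw [div_mul_cancel₀ _ h.ne']

theorem sqrt_inf'_mul_sqrt_le_div {I : Type*} [Fintype I] [Nonempty I] {α : I → ℝ}
    (hα : ∀ i, 0 < α i) (d : I → ℝ) :
    √(univ.inf' univ_nonempty α) * √(∑ i, α i * d i ^ 2) ≤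
      (∑ i, α i * d i ^ 2) / √(∑ i, d i ^ 2) := by
  set m := univ.inf' univ_nonempty α
  set f := ∑ i, α i * d i ^ 2
  set N := ∑ i, d i ^ 2
  have hf : 0 ≤ f := sum_nonneg fun i _ => mul_nonneg (hα i).le (sq_nonneg _)
  rcases (sum_nonneg fun i _ => sq_nonneg (d i) : 0 ≤ N).eq_or_lt with hN | hN
  · have hd : ∀ i, d i ^ 2 = 0 := fun i =>
      (sum_eq_zero_iff_of_nonneg fun j _ => sq_nonneg (d j)).mp hN.symm i (mem_univ i)
    simp [f, hd]
  have hmN : m * N ≤ f := by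
    rw [mul_sum]
    exact sum_le_sum fun i _ => mul_le_mul_of_nonneg_right (inf'_le _ (mem_univ i)) (sq_nonneg _)
  rw [le_div_iff₀ (Real.sqrt_pos.mpr hN)]
  calc √m * √f * √N = √(m * N) * √f := by
        rw [Real.sqrt_mul' _ hN.le]; ring
    _ ≤ √f * √f := mul_le_mul_of_nonneg_right (Real.sqrt_le_sqrt hmN) (Real.sqrt_nonneg _)
    _ = f := Real.mul_self_sqrt hf

open Finset in
theorem lyapunov_drift_bound_general {I : Type*} [Fintype I] [Nonempty I]
    (ystar α : I → ℝ) (hy0 : ystar ≠ 0) (hynn : ∀ i, 0 ≤ ystar i)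
    (hα : ∀ i, 0 < α i)
    (V : Set (I → ℝ))
    (hVmax : IsGreatest ((fun v => ∑ i, ystar i * v i) '' V) 0)
    (δ : ℝ) (hδ : 0 < δ)
    (hball : ∀ v : I → ℝ, (∑ i, ystar i * v i = 0) →
      Real.sqrt (∑ i, v i ^ 2) ≤ δ → v ∈ V)
    (z : I → ℝ) (hz : ∀ i, 0 ≤ z i)
    (v : I → ℝ) (hv : v ∈ V)
    (hvmax : ∀ v' ∈ V, ∑ i, α i * z i * v' i ≤ ∑ i, α i * z i * v i) :
    (∑ i, α i * (z i - zeta α ystar i * ∑ i', ystar i' * z i') * (-(v i)) ≤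
      -δ * (∑ i, α i * (z i - zeta α ystar i * ∑ i', ystar i' * z i') ^ 2) /
        Real.sqrt (∑ i, (z i - zeta α ystar i * ∑ i', ystar i' * z i') ^ 2)) ∧
    (-δ * (∑ i, α i * (z i - zeta α ystar i * ∑ i', ystar i' * z i') ^ 2) /
        Real.sqrt (∑ i, (z i - zeta α ystar i * ∑ i', ystar i' * z i') ^ 2) ≤
      -δ * Real.sqrt (univ.inf' univ_nonempty α) *
        Real.sqrt (∑ i, α i * (z i - zeta α ystar i * ∑ i', ystar i' * z i') ^ 2)) := by
  set w := ∑ i', ystar i' * z i'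
  set d : I → ℝ := fun i => z i - zeta α ystar i * w
  set n := √(∑ i, d i ^ 2)
  set f := ∑ i, α i * d i ^ 2
  set u : I → ℝ := fun i => δ / n * d i
  have hdecomp := sum_mul_mul_eq_sub_zeta_add (y := ystar) (fun i => (hα i).ne') w z
  have hyd : ∑ i, ystar i * d i = 0 := sum_mul_sub_zeta_mul_eq_zero hα hy0 z
  have hyu : ∑ i, ystar i * u i = 0 := by
    simp only [u, mul_left_comm (ystar _), ← mul_sum, hyd, mul_zero]
  have hu : u ∈ V := hball u hyu (sqrt_sum_sq_div_sqrt_mul_le hδ.le d)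
  have hdu : ∑ i, α i * d i * u i = δ / n * f := by
    simp only [u, f, mul_sum]
    exact sum_congr rfl fun i _ => by ring
  have hyv : w / (∑ i, ystar i ^ 2 / α i) * ∑ i, ystar i * v i ≤ 0 :=
    mul_nonpos_of_nonneg_of_nonpos
      (div_nonneg (sum_nonneg fun i _ => mul_nonneg (hynn i) (hz i))
        (sum_nonneg fun i _ => div_nonneg (sq_nonneg _) (hα i).le))
      (hVmax.2 ⟨v, hv, rfl⟩)
  refine ⟨?_, ?_⟩
  · calc ∑ i, α i * d i * -v i = -∑ i, α i * d i * v i := by simp only [mul_neg, sum_neg_distrib]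
      _ ≤ -∑ i, α i * d i * u i := by
        have := hvmax u hu
        rw [hdecomp v, hdecomp u, hyu] at this
        linarith
      _ = -δ * f / n := by rw [hdu]; ring
  · calc -δ * f / n = -(δ * (f / n)) := by ring
      _ ≤ -(δ * (√(univ.inf' univ_nonempty α) * √f)) :=
        neg_le_neg (mul_le_mul_of_nonneg_left (sqrt_inf'_mul_sqrt_le_div hα d) hδ.le)
      _ = _ := by ring

open Finset in
/-- The key Lyapunov drift estimate (6.15)-(6.18) in the proof of Theorem 6. -/
theorem lyapunov_drift_bound {I : Type*} [Fintype I] [Nonempty I]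
    (ystar α : I → ℝ) (hy0 : ystar ≠ 0) (hynn : ∀ i, 0 ≤ ystar i)
    (hα : ∀ i, 0 < α i)
    (V : Set (I → ℝ)) (hVcomp : IsCompact V) (hVconv : Convex ℝ V)
    (h0V : (0 : I → ℝ) ∈ V)
    (hVmax : IsGreatest ((fun v => ∑ i, ystar i * v i) '' V) 0)
    (δ : ℝ) (hδ : 0 < δ)
    (hball : ∀ v : I → ℝ, (∑ i, ystar i * v i = 0) →
      Real.sqrt (∑ i, v i ^ 2) ≤ δ → v ∈ V)
    (z : I → ℝ) (hz : ∀ i, 0 ≤ z i)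
    (hzne : z ≠ fun i => zeta α ystar i * ∑ i', ystar i' * z i')
    (v : I → ℝ) (hv : v ∈ V)
    (hvmax : ∀ v' ∈ V, ∑ i, α i * z i * v' i ≤ ∑ i, α i * z i * v i) :
    (∑ i, α i * (z i - zeta α ystar i * ∑ i', ystar i' * z i') * (-(v i)) ≤
      -δ * (∑ i, α i * (z i - zeta α ystar i * ∑ i', ystar i' * z i') ^ 2) /
        Real.sqrt (∑ i, (z i - zeta α ystar i * ∑ i', ystar i' * z i') ^ 2)) ∧
    (-δ * (∑ i, α i * (z i - zeta α ystar i * ∑ i', ystar i' * z i') ^ 2) /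
        Real.sqrt (∑ i, (z i - zeta α ystar i * ∑ i', ystar i' * z i') ^ 2) ≤
      -δ * Real.sqrt (univ.inf' univ_nonempty α) *
        Real.sqrt (∑ i, α i * (z i - zeta α ystar i * ∑ i', ystar i' * z i') ^ 2)) :=
  lyapunov_drift_bound_general ystar α hy0 hynn hα V hVmax δ hδ hball z hz v hv hvmax
end

section
/- Let f : [0,∞) → ℝ be a locally Lipschitz function with f(t) ≥ 0 for all t ≥ 0, and let c > 0. Suppose that for (Lebesgue) almost every t > 0, f is differentiable at t and f′(t) ≤ −c·√(f(t)). Then f(t) = 0 for all t ≥ 2√(f(0))/c; moreover, if f(τ₁) = 0 for some τ₁ ≥ 0, then f(t) = 0 for all t ≥ τ₁. -/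
/-!
Lipschitz functions on compact intervals are absolutely continuous, so the fundamental theorem
of calculus turns an a.e. bound `f' ≤ m` into `f b - f a ≤ m (b - a)`. With `m = 0` this makes
`f` antitone on `[0, ∞)`, which gives the second claim together with `f ≥ 0`. If `f t > 0`, then
`f ≥ f t > 0` on `[0, t]`, where `√f` is again Lipschitz with `(√f)' = f' / (2√f) ≤ -c/2` a.e.;
hence `0 < √(f t) ≤ √(f 0) - c t / 2`, forcing `t < 2√(f 0)/c`.
-/

open MeasureTheory Set

theorem LocallyLipschitzOn.absolutelyContinuousOnInterval {X : Type*} [PseudoMetricSpace X]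
    {f : ℝ → X} {s : Set ℝ} {a b : ℝ} (hf : LocallyLipschitzOn s f) (hs : uIcc a b ⊆ s) :
    AbsolutelyContinuousOnInterval f a b :=
  let ⟨_, hK⟩ := (hf.mono hs).exists_lipschitzOnWith_of_compact isCompact_uIcc
  hK.absolutelyContinuousOnInterval

theorem AbsolutelyContinuousOnInterval.sub_le_mul_of_ae_deriv_le {g : ℝ → ℝ} {a b m : ℝ}
    (hg : AbsolutelyContinuousOnInterval g a b) (hab : a ≤ b)
    (hd : ∀ᵐ t ∂volume.restrict (Ioo a b), deriv g t ≤ m) :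
    g b - g a ≤ m * (b - a) := by
  rw [← hg.integral_deriv_eq_sub]
  calc ∫ t in a..b, deriv g t ≤ ∫ _ in a..b, m := by
        refine intervalIntegral.integral_mono_ae_restrict hab hg.intervalIntegrable_deriv
          intervalIntegrable_const ?_
        rwa [Measure.restrict_congr_set Ioo_ae_eq_Icc] at hd
    _ = m * (b - a) := by simp [mul_comm]

theorem antitoneOn_of_ae_deriv_nonpos {f : ℝ → ℝ} {s : Set ℝ} (hs : s.OrdConnected)
    (hf : LocallyLipschitzOn s f) (hd : ∀ᵐ t ∂volume.restrict s, deriv f t ≤ 0) :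
    AntitoneOn f s := by
  intro a ha b hb hab
  have hIcc : Icc a b ⊆ s := hs.out ha hb
  have hac := hf.absolutelyContinuousOnInterval (a := a) (b := b) (by rwa [uIcc_of_le hab])
  have := hac.sub_le_mul_of_ae_deriv_le hab
    (ae_restrict_of_ae_restrict_of_subset (Ioo_subset_Icc_self.trans hIcc) hd)
  linarith

theorem sqrt_sub_sqrt_le_of_hasDerivAt_le {f : ℝ → ℝ} {a b c : ℝ} (hab : a ≤ b)
    (hf : LocallyLipschitzOn (Icc a b) f) (hanti : AntitoneOn f (Icc a b)) (hpos : 0 < f b)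
    (hd : ∀ᵐ t ∂volume.restrict (Ioo a b), ∃ d, HasDerivAt f d t ∧ d ≤ -c * √(f t)) :
    √(f b) - √(f a) ≤ -(c / 2) * (b - a) := by
  have hmaps : MapsTo f (Icc a b) (Icc (f b) (f a)) := fun t ht =>
    ⟨hanti ht (right_mem_Icc.2 hab) ht.2, hanti (left_mem_Icc.2 hab) ht ht.1⟩
  obtain ⟨Kf, hKf⟩ := hf.exists_lipschitzOnWith_of_compact isCompact_Icc
  obtain ⟨Ks, hKs⟩ := ContDiffOn.exists_lipschitzOnWith (n := 1)
    (fun x hx => (Real.contDiffAt_sqrt (hpos.trans_le hx.1).ne').contDiffWithinAt)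
    one_ne_zero (convex_Icc _ _) isCompact_Icc
  have hac : AbsolutelyContinuousOnInterval (fun t => √(f t)) a b :=
    (uIcc_of_le hab ▸ hKs.comp hKf hmaps).absolutelyContinuousOnInterval
  refine hac.sub_le_mul_of_ae_deriv_le hab ?_
  filter_upwards [hd, ae_restrict_mem measurableSet_Ioo] with t ⟨d, hfd, hdle⟩ ht
  have hft : 0 < f t :=
    hpos.trans_le (hanti (Ioo_subset_Icc_self ht) (right_mem_Icc.2 hab) ht.2.le)
  rw [(hfd.sqrt hft.ne').deriv, div_le_iff₀ (by positivity)]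
  linarith

open MeasureTheory in
/-- The Lyapunov ODE comparison lemma used in the proof of Theorem 6: if a
nonnegative locally Lipschitz function satisfies `f' ≤ -c √f` a.e., then it
hits `0` by time `2√(f 0)/c` and stays at `0` afterwards. -/
theorem lyapunov_hits_zero (f : ℝ → ℝ) (c : ℝ) (hc : 0 < c)
    (hLip : LocallyLipschitzOn (Set.Ici 0) f)
    (hnonneg : ∀ t, 0 ≤ t → 0 ≤ f t)
    (hderiv : ∀ᵐ t ∂(volume.restrict (Set.Ioi (0 : ℝ))),
      ∃ d : ℝ, HasDerivAt f d t ∧ d ≤ -c * Real.sqrt (f t)) :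
    (∀ t, 2 * Real.sqrt (f 0) / c ≤ t → f t = 0) ∧
    ∀ τ₁, 0 ≤ τ₁ → f τ₁ = 0 → ∀ t, τ₁ ≤ t → f t = 0 := by
  have hanti : AntitoneOn f (Ici 0) := by
    refine antitoneOn_of_ae_deriv_nonpos ordConnected_Ici hLip ?_
    rw [← Measure.restrict_congr_set Ioi_ae_eq_Ici]
    filter_upwards [hderiv] with t ⟨d, hfd, hdle⟩
    rw [hfd.deriv]
    nlinarith [Real.sqrt_nonneg (f t)]
  refine ⟨fun t ht => ?_, fun τ₁ hτ₁ hfτ₁ t ht =>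
    le_antisymm (hfτ₁ ▸ hanti hτ₁ (hτ₁.trans ht) ht) (hnonneg t (hτ₁.trans ht))⟩
  have ht0 : 0 ≤ t := le_trans (by positivity) ht
  by_contra hft
  have hpos : 0 < f t := (hnonneg t ht0).lt_of_ne' hft
  have hdecay := sqrt_sub_sqrt_le_of_hasDerivAt_le ht0 (hLip.mono Icc_subset_Ici_self)
    (hanti.mono Icc_subset_Ici_self) hpos
    (ae_restrict_of_ae_restrict_of_subset Ioo_subset_Ioi_self hderiv)
  have hct : 2 * √(f 0) ≤ c * t := (div_le_iff₀' hc).1 ht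
  linarith [Real.sqrt_pos.2 hpos]
end

section
/- Let (R, A) be network data with nonempty allocation set 𝒜. Then for every y ∈ ℝ^ℐ: max_{a∈𝒜} Σ_{i∈ℐ} Σ_{j∈𝒥} y_i R_{ij} a_j = max_{a∈𝒜} Σ_{i∈ℐ} Σ_{j∈𝒥_I} y_i R_{ij} a_j + max_{a∈𝒜} Σ_{i∈ℐ} Σ_{j∈𝒥_S} y_i R_{ij} a_j. -/
open Finset

/-!
Because no processor serves both an input and a service activity, an allocation can take its
input coordinates from one element of `𝒜` and its service coordinates from another and still lie
in `𝒜`: the allocation set is the product of its input and service projections. A linear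
objective that separates over the two blocks is therefore maximised blockwise.
-/

open Pointwise in
theorem Set.image_add_eq_add_image_of_forall_exists {α β : Type*} [Add β] {S : Set α}
    {f g : α → β} (hmix : ∀ a ∈ S, ∀ b ∈ S, ∃ c ∈ S, f c = f a ∧ g c = g b) :
    (fun a => f a + g a) '' S = f '' S + g '' S := by
  apply Set.Subset.antisymm
  · rintro _ ⟨a, ha, rfl⟩
    exact Set.add_mem_add (Set.mem_image_of_mem f ha) (Set.mem_image_of_mem g ha)
  · rintro _ ⟨_, ⟨a, ha, rfl⟩, _, ⟨b, hb, rfl⟩, rfl⟩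
    obtain ⟨c, hc, hfc, hgc⟩ := hmix a ha b hb
    exact ⟨c, hc, by simp only [hfc, hgc]⟩

section Network

variable {J K : Type*} [Fintype J]

theorem sum_mul_piecewise_of_forall_notMem [DecidableEq J] {s : Finset J} {w a b : J → ℝ}
    (hw : ∀ j ∉ s, w j = 0) : ∑ j, w j * s.piecewise a b j = ∑ j, w j * a j := by
  refine Finset.sum_congr rfl fun j _ => ?_
  by_cases hj : j ∈ s
  · rw [s.piecewise_eq_of_mem _ _ hj]
  · rw [hw j hj, zero_mul, zero_mul]

theorem sum_mul_piecewise_of_forall_mem [DecidableEq J] {s : Finset J} {w a b : J → ℝ}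
    (hw : ∀ j ∈ s, w j = 0) : ∑ j, w j * s.piecewise a b j = ∑ j, w j * b j := by
  refine Finset.sum_congr rfl fun j _ => ?_
  by_cases hj : j ∈ s
  · rw [hw j hj, zero_mul, zero_mul]
  · rw [s.piecewise_eq_of_notMem _ _ hj]

theorem piecewise_mem_alloc [DecidableEq J] {A : K → J → ℝ} {JI : Finset J}
    {KI : Finset K}
    (hblock : ∀ k j, ((k ∈ KI ∧ j ∉ JI) ∨ (k ∉ KI ∧ j ∈ JI)) → A k j = 0)
    {a b : J → ℝ} (ha : a ∈ Alloc A KI) (hb : b ∈ Alloc A KI) :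
    JI.piecewise a b ∈ Alloc A KI := by
  obtain ⟨ha₀, ha₁, haI⟩ := ha
  obtain ⟨hb₀, hb₁, -⟩ := hb
  have hinput : ∀ k ∈ KI, ∑ j, A k j * JI.piecewise a b j = ∑ j, A k j * a j := fun k hk =>
    sum_mul_piecewise_of_forall_notMem fun j hj => hblock k j (.inl ⟨hk, hj⟩)
  have hservice : ∀ k ∉ KI, ∑ j, A k j * JI.piecewise a b j = ∑ j, A k j * b j := fun k hk =>
    sum_mul_piecewise_of_forall_mem fun j hj => hblock k j (.inr ⟨hk, hj⟩)
  refine ⟨fun j => ?_, fun k => ?_, fun k hk => (hinput k hk).trans (haI k hk)⟩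
  · by_cases hj : j ∈ JI
    · simpa [hj] using ha₀ j
    · simpa [hj] using hb₀ j
  · by_cases hk : k ∈ KI
    · exact (hinput k hk).trans_le (ha₁ k)
    · exact (hservice k hk).trans_le (hb₁ k)

theorem alloc_subset_pi_Icc {A : K → J → ℝ} {KI : Finset K} (hA₀ : ∀ k j, 0 ≤ A k j)
    (hcover : ∀ j, ∃ k, A k j = 1) :
    Alloc A KI ⊆ Set.univ.pi fun _ => Set.Icc 0 1 := by
  rintro a ⟨ha₀, ha₁, -⟩ j -
  obtain ⟨k, hk⟩ := hcover j
  refine ⟨ha₀ j, ?_⟩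
  calc a j = A k j * a j := by rw [hk, one_mul]
    _ ≤ ∑ j', A k j' * a j' :=
        Finset.single_le_sum (fun j' _ => mul_nonneg (hA₀ k j') (ha₀ j')) (Finset.mem_univ j)
    _ ≤ 1 := ha₁ k

theorem isClosed_alloc (A : K → J → ℝ) (KI : Finset K) : IsClosed (Alloc A KI) := by
  simp only [Alloc, Set.ofPred_and, Set.ofPred_forall]
  refine .inter (isClosed_iInter fun j => isClosed_le continuous_const (continuous_apply j))
    (.inter (isClosed_iInter fun k => isClosed_le (by fun_prop) continuous_const)
      (isClosed_iInter fun k => isClosed_iInter fun _ =>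
        isClosed_eq (by fun_prop) continuous_const))

theorem isCompact_alloc {A : K → J → ℝ} {KI : Finset K} (hA₀ : ∀ k j, 0 ≤ A k j)
    (hcover : ∀ j, ∃ k, A k j = 1) : IsCompact (Alloc A KI) :=
  (isCompact_univ_pi fun _ => isCompact_Icc).of_isClosed_subset (isClosed_alloc A KI)
    (alloc_subset_pi_Icc hA₀ hcover)

end Network

theorem max_rate_decomposition_general {I J K : Type*} [Fintype I] [Fintype J] [Fintype K] [DecidableEq J]
    (R : I → J → ℝ) (A : K → J → ℝ) (JI : Finset J) (KI : Finset K)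
    (hND : NetData A JI KI)
    (hA : (Alloc A KI).Nonempty) (y : I → ℝ) :
    sSup ((fun a => ∑ i, ∑ j, y i * R i j * a j) '' Alloc A KI) =
      sSup ((fun a => ∑ i, ∑ j ∈ JI, y i * R i j * a j) '' Alloc A KI) +
        sSup ((fun a => ∑ i, ∑ j ∈ JIᶜ, y i * R i j * a j) '' Alloc A KI) := by
  obtain ⟨h01, hblock, hcover⟩ := hND
  have hA₀ : ∀ k j, 0 ≤ A k j := fun k j => by rcases h01 k j with h | h <;> simp [h]
  have hbdd : ∀ s : Finset J,
      BddAbove ((fun a => ∑ i, ∑ j ∈ s, y i * R i j * a j) '' Alloc A KI) :=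
    fun s => (isCompact_alloc hA₀ hcover).bddAbove_image (by fun_prop)
  have hsplit : (fun a => ∑ i, ∑ j, y i * R i j * a j) = fun a : J → ℝ =>
      ∑ i, ∑ j ∈ JI, y i * R i j * a j + ∑ i, ∑ j ∈ JIᶜ, y i * R i j * a j := by
    funext a
    simp only [← Finset.sum_add_distrib, Finset.sum_add_sum_compl]
  rw [hsplit, Set.image_add_eq_add_image_of_forall_exists, csSup_add (hA.image _) (hbdd JI)
    (hA.image _) (hbdd JIᶜ)]
  intro a ha b hb
  refine ⟨JI.piecewise a b, piecewise_mem_alloc hblock ha hb, ?_, ?_⟩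
  · exact Finset.sum_congr rfl fun i _ => Finset.sum_congr rfl fun j hj => by
      rw [JI.piecewise_eq_of_mem a b hj]
  · exact Finset.sum_congr rfl fun i _ => Finset.sum_congr rfl fun j hj => by
      rw [JI.piecewise_eq_of_notMem a b (Finset.mem_compl.mp hj)]

/-- Decomposition of the maximal workload rate over the allocation set into its
input-activity part and its service-activity part. -/
theorem max_rate_decomposition {I J K : Type*} [Fintype I] [Fintype J] [Fintype K] [DecidableEq J] [DecidableEq K]
    (R : I → J → ℝ) (A : K → J → ℝ) (JI : Finset J) (KI : Finset K)
    (hND : NetData A JI KI)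
    (hA : (Alloc A KI).Nonempty) (y : I → ℝ) :
    sSup ((fun a => ∑ i, ∑ j, y i * R i j * a j) '' Alloc A KI) =
      sSup ((fun a => ∑ i, ∑ j ∈ JI, y i * R i j * a j) '' Alloc A KI) +
        sSup ((fun a => ∑ i, ∑ j ∈ JIᶜ, y i * R i j * a j) '' Alloc A KI) :=
  max_rate_decomposition_general R A JI KI hND hA y
end
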